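/- arXiv:1210.1058 — 10 statements merged into one kernel-verified Lean document; each statement's English description precedes it below -/
import Mathlib

section
/- Let Ψ_0,...,Ψ_{k-1} be a Chebyshev system on [A,B], and let A ≤ z_1 < ... < z_{k+1} ≤ B and coefficients r_1,...,r_{k+1} satisfy ∑_{i=1}^{k+1} r_i Ψ_l(z_i) = 0 for l = 0,...,k-1. If some r_i is nonzero, then all r_i are nonzero; moreover, all r_i with odd index i have the same sign, which is opposite to the common sign of the r_i with even index i. -/
/-- A Chebyshev system on `[A,B]`: the determinant of the matrix of values at any
strictly increasing tuple of points of `[A,B]` is strictly positive. -/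
def ChebyshevSystem (A B : ℝ) {m : ℕ} (u : Fin m → ℝ → ℝ) : Prop :=
  ∀ z : Fin m → ℝ, StrictMono z → (∀ i, z i ∈ Set.Icc A B) →
    0 < (Matrix.of fun i j => u i (z j)).det

/-!
The coefficients `r` form a kernel vector of the `k × (k+1)` matrix `M = (Ψ_l(z_i))`, whose
maximal minors `D_p` (delete the column `p`) are positive by the Chebyshev property. Bordering
`M` by the row `r` gives a square matrix `N` with `N r = (|r|², 0, …, 0)`, and Cramer's rule
yields `det N · r_p = |r|² (-1)^p D_p`. Hence `r` is a nonzero multiple of the alternating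
vector `((-1)^p D_p)_p`.
-/

open Matrix

namespace Matrix

theorem det_cons_mul_of_mulVec_eq_zero {R : Type*} [CommRing R] {k : ℕ}
    (M : Matrix (Fin k) (Fin (k + 1)) R) (w r : Fin (k + 1) → R) (hr : M *ᵥ r = 0)
    (p : Fin (k + 1)) :
    (of (vecCons w (of.symm M))).det * r p =
      (w ⬝ᵥ r) * ((-1) ^ (p : ℕ) * (M.submatrix id p.succAbove).det) := by
  set N : Matrix (Fin (k + 1)) (Fin (k + 1)) R := of (vecCons w (of.symm M))
  have hNr : N *ᵥ r = Pi.single 0 (w ⬝ᵥ r) := by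
    ext i
    induction i using Fin.cases with
    | zero => simp [N, mulVec]
    | succ l => simpa [N, mulVec, Pi.single_eq_of_ne (Fin.succ_ne_zero l)] using congrFun hr l
  have hadj : N.adjugate p 0 = (-1) ^ (p : ℕ) * (M.submatrix id p.succAbove).det := by
    rw [adjugate_fin_succ_eq_det_submatrix]
    simp [N, submatrix]
  have hcramer : N.adjugate *ᵥ (N *ᵥ r) = N.det • r := by
    rw [mulVec_mulVec, adjugate_mul, smul_mulVec, one_mulVec]
  rw [hNr, mulVec_single] at hcramer
  rw [← hadj, mul_comm (w ⬝ᵥ r)]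
  simpa using (congrFun hcramer p).symm

theorem exists_sign_alternating_of_mulVec_eq_zero {k : ℕ} (M : Matrix (Fin k) (Fin (k + 1)) ℝ)
    (hM : ∀ p : Fin (k + 1), 0 < (M.submatrix id p.succAbove).det) {r : Fin (k + 1) → ℝ}
    (hr : M *ᵥ r = 0) (hne : r ≠ 0) :
    ∃ s : ℝ, (s = 1 ∨ s = -1) ∧ ∀ p : Fin (k + 1), 0 < (-1) ^ (p : ℕ) * (s * r p) := by
  set d := (of (vecCons r (of.symm M))).det
  have hrr : 0 < r ⬝ᵥ r := by
    obtain ⟨i, hi⟩ := Function.ne_iff.mp hne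
    exact Finset.sum_pos' (fun q _ => mul_self_nonneg _)
      ⟨i, Finset.mem_univ _, mul_self_pos.mpr hi⟩
  have halt : ∀ p : Fin (k + 1), 0 < (-1) ^ (p : ℕ) * (d * r p) := fun p => by
    have hsq : (-1 : ℝ) ^ (p : ℕ) * (-1) ^ (p : ℕ) = 1 := by simp [← mul_pow]
    calc 0 < r ⬝ᵥ r * (M.submatrix id p.succAbove).det := mul_pos hrr (hM p)
      _ = _ := by
        rw [det_cons_mul_of_mulVec_eq_zero M r r hr p]
        linear_combination -(r ⬝ᵥ r * (M.submatrix id p.succAbove).det) * hsq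
  have hd : d ≠ 0 := by
    intro hd
    simpa [hd] using halt 0
  refine ⟨Real.sign d, (Real.sign_apply_eq_of_ne_zero d hd).symm, fun p => ?_⟩
  refine pos_of_mul_pos_left (b := Real.sign d * d) ?_ (Real.sign_mul_pos_of_ne_zero d hd).le
  have hsq : Real.sign d * Real.sign d = 1 := by
    rcases Real.sign_apply_eq_of_ne_zero d hd with h | h <;> simp [h]
  calc 0 < (-1) ^ (p : ℕ) * (d * r p) := halt p
    _ = _ := by linear_combination -((-1) ^ (p : ℕ) * d * r p) * hsq

end Matrix

theorem ChebyshevSystem.det_submatrix_succAbove_pos {A B : ℝ} {k : ℕ} {Ψ : Fin k → ℝ → ℝ}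
    (hΨ : ChebyshevSystem A B Ψ) {z : Fin (k + 1) → ℝ} (hz : StrictMono z)
    (hzmem : ∀ i, z i ∈ Set.Icc A B) (p : Fin (k + 1)) :
    0 < ((of fun l i => Ψ l (z i)).submatrix id p.succAbove).det :=
  hΨ (z ∘ p.succAbove) (hz.comp (Fin.strictMono_succAbove p)) fun _ => hzmem _

theorem stmt_1_general (A B : ℝ) (k : ℕ) (Ψ : Fin k → ℝ → ℝ)
    (hcheb : ChebyshevSystem A B Ψ)
    (z : Fin (k + 1) → ℝ) (hz : StrictMono z)
    (hzmem : ∀ i, z i ∈ Set.Icc A B) (r : Fin (k + 1) → ℝ)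
    (heq : ∀ l : Fin k, ∑ i, r i * Ψ l (z i) = 0)
    (hne : ∃ i, r i ≠ 0) :
    (∀ i, r i ≠ 0) ∧
      ∃ s : ℝ, (s = 1 ∨ s = -1) ∧
        ∀ i : Fin (k + 1),
          (Even (i : ℕ) → 0 < s * r i) ∧ (Odd (i : ℕ) → s * r i < 0) := by
  have hker : (of fun l i => Ψ l (z i)) *ᵥ r = 0 :=
    funext fun l => by simpa [mulVec, dotProduct, mul_comm] using heq l
  have hr : r ≠ 0 := fun h => by
    obtain ⟨i, hi⟩ := hne
    exact hi (congrFun h i)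
  obtain ⟨s, hs, halt⟩ := exists_sign_alternating_of_mulVec_eq_zero _
    (hcheb.det_submatrix_succAbove_pos hz hzmem) hker hr
  refine ⟨fun i hi => by simpa [hi] using halt i, s, hs, fun i => ⟨fun he => ?_, fun ho => ?_⟩⟩
  · simpa [he.neg_one_pow] using halt i
  · simpa [ho.neg_one_pow] using halt i

/-- Here `i : Fin (k+1)` corresponds to the paper's index `i+1`, so the paper's
odd indices are the `i` with even `i.val`. -/
theorem stmt_1 (A B : ℝ) (k : ℕ) (Ψ : Fin k → ℝ → ℝ)
    (hcont : ∀ i, ContinuousOn (Ψ i) (Set.Icc A B))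
    (hcheb : ChebyshevSystem A B Ψ)
    (z : Fin (k + 1) → ℝ) (hz : StrictMono z)
    (hzmem : ∀ i, z i ∈ Set.Icc A B) (r : Fin (k + 1) → ℝ)
    (heq : ∀ l : Fin k, ∑ i, r i * Ψ l (z i) = 0)
    (hne : ∃ i, r i ≠ 0) :
    (∀ i, r i ≠ 0) ∧
      ∃ s : ℝ, (s = 1 ∨ s = -1) ∧
        ∀ i : Fin (k + 1),
          (Even (i : ℕ) → 0 < s * r i) ∧ (Odd (i : ℕ) → s * r i < 0) :=
  stmt_1_general A B k Ψ hcheb z hz hzmem r heq hne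
end

section
/- Let k = 2n-1 and let Ψ_0 = 1, Ψ_1, ..., Ψ_{k-1} be a Chebyshev system on [A,B]. Let c_1 < c̃_1 < c_2 < c̃_2 < ... < c_n < c̃_n = B be points in [A,B] with positive weights ω_1,...,ω_n and ω̃_1,...,ω̃_n satisfying ∑_i ω_i Ψ_l(c_i) = ∑_i ω̃_i Ψ_l(c̃_i) for l = 0,1,...,k-1. If Ψ_k is a function on [A,B] such that {Ψ_0, Ψ_1, ..., Ψ_{k-1}, Ψ_k} is also a Chebyshev system, then ∑_i ω_i Ψ_k(c_i) < ∑_i ω̃_i Ψ_k(c̃_i). -/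
theorem Fin.strictMono_of_lt_val_add_one {α : Type*} [Preorder α] {N : ℕ} {f : Fin N → α}
    (h : ∀ (j : ℕ) (hj : j + 1 < N), f ⟨j, by omega⟩ < f ⟨j + 1, hj⟩) : StrictMono f := by
  cases N with
  | zero => exact fun a => a.elim0
  | succ N => exact Fin.strictMono_iff_lt_succ.2 fun i => h i (by omega)

theorem Fin.sum_univ_two_mul {M : Type*} [AddCommMonoid M] {n : ℕ} (f : Fin (2 * n) → M) :
    ∑ j, f j = ∑ i : Fin n, (f ⟨2 * i, by omega⟩ + f ⟨2 * i + 1, by omega⟩) := by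
  rw [← (finProdFinEquiv.trans (finCongr (Nat.mul_comm n 2))).sum_comp, Fintype.sum_prod_type]
  refine Finset.sum_congr rfl fun i _ => ?_
  rw [Fin.sum_univ_two]
  congr 2 <;> ext <;> simp [finProdFinEquiv]; ring

section Interleave

variable {α : Type*} {n : ℕ}

def interleave (a b : Fin n → α) (j : Fin (2 * n)) : α :=
  if Even (j : ℕ) then a ⟨j / 2, by omega⟩ else b ⟨j / 2, by omega⟩

@[simp]
theorem interleave_two_mul (a b : Fin n → α) (i : ℕ) (hi : 2 * i < 2 * n) :
    interleave a b ⟨2 * i, hi⟩ = a ⟨i, by omega⟩ := by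
  simp [interleave]

@[simp]
theorem interleave_two_mul_add_one (a b : Fin n → α) (i : ℕ) (hi : 2 * i + 1 < 2 * n) :
    interleave a b ⟨2 * i + 1, hi⟩ = b ⟨i, by omega⟩ := by
  simp [interleave, show (2 * i + 1) / 2 = i by omega]

theorem interleave_mem {s : Set α} {a b : Fin n → α} (ha : ∀ i, a i ∈ s) (hb : ∀ i, b i ∈ s)
    (j : Fin (2 * n)) : interleave a b j ∈ s := by
  unfold interleave
  split_ifs
  exacts [ha _, hb _]

theorem strictMono_interleave [Preorder α] {a b : Fin n → α} (hab : ∀ i, a i < b i)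
    (hba : ∀ (i : Fin n) (h : i.val + 1 < n), b i < a ⟨i.val + 1, h⟩) :
    StrictMono (interleave a b) := by
  refine Fin.strictMono_of_lt_val_add_one fun j hj => ?_
  obtain ⟨i, rfl | rfl⟩ := Nat.even_or_odd' j
  · simpa using hab ⟨i, by omega⟩
  · have hsucc : (⟨2 * i + 1 + 1, hj⟩ : Fin (2 * n)) = ⟨2 * (i + 1), by omega⟩ := Fin.ext (by ring)
    rw [hsucc, interleave_two_mul, interleave_two_mul_add_one]
    exact hba ⟨i, by omega⟩ (by simp only; omega)

end Interleave

open Matrix in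
theorem Matrix.det_mul_apply_zero_of_mulVec_castSucc_eq_zero {R : Type*} [CommRing R] {m : ℕ}
    (M : Matrix (Fin (m + 1)) (Fin (m + 1)) R) (v : Fin (m + 1) → R)
    (hv : ∀ i : Fin m, (M *ᵥ v) i.castSucc = 0) :
    M.det * v 0 = (-1) ^ m * (M.submatrix Fin.castSucc Fin.succ).det * (M *ᵥ v) (Fin.last m) := by
  have hcramer : M.det • v = M.adjugate *ᵥ (M *ᵥ v) := by
    rw [mulVec_mulVec, adjugate_mul, smul_mulVec, one_mulVec]
  have h0 := congrFun hcramer 0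
  rw [Pi.smul_apply, smul_eq_mul, mulVec, dotProduct, Fin.sum_univ_castSucc] at h0
  simp only [hv, mul_zero, Finset.sum_const_zero, zero_add] at h0
  rw [h0, adjugate_fin_succ_eq_det_submatrix]
  simp [Fin.succAbove_last, Fin.succAbove_zero]

open Matrix in
theorem ChebyshevSystem.sum_pos_of_orthogonal {A B : ℝ} {N : ℕ} (hN : 0 < N)
    {u : Fin N → ℝ → ℝ} (hu : ChebyshevSystem A B u)
    (hu' : ChebyshevSystem A B fun l : Fin (N - 1) => u (Fin.castLE (Nat.sub_le N 1) l))
    {z : Fin N → ℝ} (hz : StrictMono z) (hzAB : ∀ j, z j ∈ Set.Icc A B) {v : Fin N → ℝ}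
    (hv : ∀ l : Fin (N - 1), ∑ j, v j * u (Fin.castLE (Nat.sub_le N 1) l) (z j) = 0)
    (hv0 : 0 < (-1) ^ (N - 1) * v ⟨0, hN⟩) :
    0 < ∑ j, v j * u ⟨N - 1, Nat.sub_lt hN one_pos⟩ (z j) := by
  obtain ⟨m, rfl⟩ : ∃ m, N = m + 1 := ⟨N - 1, by omega⟩
  change ChebyshevSystem A B fun l : Fin m => u l.castSucc at hu'
  change ∀ l : Fin m, ∑ j, v j * u l.castSucc (z j) = 0 at hv
  change 0 < (-1) ^ m * v 0 at hv0
  change 0 < ∑ j, v j * u (Fin.last m) (z j)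
  set M : Matrix (Fin (m + 1)) (Fin (m + 1)) ℝ := Matrix.of fun i j => u i (z j)
  have hMv : ∀ i, (M *ᵥ v) i = ∑ j, v j * u i (z j) := fun i => by
    simp [M, mulVec, dotProduct, mul_comm]
  set D := (M.submatrix Fin.castSucc Fin.succ).det
  set S := ∑ j, v j * u (Fin.last m) (z j)
  have hD : 0 < D := hu' _ (hz.comp Fin.strictMono_succ) fun j => hzAB _
  have hcramer : M.det * v 0 = (-1) ^ m * D * S := by
    rw [M.det_mul_apply_zero_of_mulVec_castSucc_eq_zero v fun i => (hMv _).trans (hv i), hMv]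
  have hsign : ((-1 : ℝ) ^ m) ^ 2 = 1 := by rw [← pow_mul, pow_mul', neg_one_sq, one_pow]
  have hDS : 0 < D * S := by
    have hdet_v0 : 0 < M.det * ((-1) ^ m * v 0) := mul_pos (hu z hz hzAB) hv0
    linear_combination hdet_v0 + (-1) ^ m * hcramer + D * S * hsign
  exact pos_of_mul_pos_right hDS hD.le

/-- `k = 2n - 1`: `Ψ` lists `Ψ_0, …, Ψ_k`, so `2 * n` functions. -/
theorem stmt_3 (A B : ℝ) (n : ℕ) (hn : 0 < n) (Ψ : Fin (2 * n) → ℝ → ℝ)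
    (hcheb1 : ChebyshevSystem A B fun l : Fin (2 * n - 1) => Ψ (Fin.castLE (by omega) l))
    (hcheb2 : ChebyshevSystem A B Ψ)
    (c ct : Fin n → ℝ) (ω ωt : Fin n → ℝ)
    (hω : ∀ i, 0 < ω i)
    (hmemc : ∀ i, c i ∈ Set.Icc A B) (hmemct : ∀ i, ct i ∈ Set.Icc A B)
    (hord1 : ∀ i : Fin n, c i < ct i)
    (hord2 : ∀ i : Fin n, ∀ h : i.val + 1 < n, ct i < c ⟨i.val + 1, h⟩)
    (heq : ∀ l : Fin (2 * n - 1),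
      ∑ i, ω i * Ψ (Fin.castLE (by omega) l) (c i)
        = ∑ i, ωt i * Ψ (Fin.castLE (by omega) l) (ct i)) :
    ∑ i, ω i * Ψ ⟨2 * n - 1, by omega⟩ (c i)
      < ∑ i, ωt i * Ψ ⟨2 * n - 1, by omega⟩ (ct i) := by
  have h2n : 0 < 2 * n := Nat.mul_pos two_pos hn
  set z := interleave c ct
  set v := interleave (-ω) ωt
  have hsum : ∀ g : ℝ → ℝ, ∑ j, v j * g (z j) = ∑ i, ωt i * g (ct i) - ∑ i, ω i * g (c i) := by
    intro g
    rw [Fin.sum_univ_two_mul, ← Finset.sum_sub_distrib]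
    refine Finset.sum_congr rfl fun i _ => ?_
    simp only [z, v, interleave_two_mul, interleave_two_mul_add_one, Fin.eta, Pi.neg_apply]
    ring
  have hv0 : 0 < (-1) ^ (2 * n - 1) * v ⟨0, h2n⟩ := by
    rw [Odd.neg_one_pow ⟨n - 1, by omega⟩]
    simpa [v, interleave] using hω ⟨0, hn⟩
  have hpos := hcheb2.sum_pos_of_orthogonal h2n hcheb1
    (strictMono_interleave hord1 hord2) (interleave_mem hmemc hmemct)
    (fun l => by rw [hsum, heq, sub_self]) hv0
  rw [hsum] at hpos
  exact sub_pos.mp hpos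
end

section
/- Let k = 2n and let Ψ_0 = 1, Ψ_1, ..., Ψ_{k-1} be a Chebyshev system on [A,B]. Let A = c̃_0 < c_1 < c̃_1 < ... < c_n < c̃_n = B with positive weights ω_1,...,ω_n and ω̃_0, ω̃_1,...,ω̃_n satisfying ∑_{i=1}^n ω_i Ψ_l(c_i) = ∑_{i=0}^n ω̃_i Ψ_l(c̃_i) for l = 0,...,k-1. If Ψ_k is a function such that {Ψ_0, ..., Ψ_{k-1}, Ψ_k} is also a Chebyshev system, then ∑_i ω_i Ψ_k(c_i) < ∑_i ω̃_i Ψ_k(c̃_i). -/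
namespace Fin

variable {α : Type*} {n : ℕ}

/-- `interleave a b = (a 0, b 0, a 1, b 1, …, b (n - 1), a n)`. -/
def interleave (a : Fin (n + 1) → α) (b : Fin n → α) (j : Fin (2 * n + 1)) : α :=
  if h : (j : ℕ) % 2 = 0 then a ⟨j / 2, by omega⟩ else b ⟨j / 2, by omega⟩

@[simp]
theorem interleave_two_mul (a : Fin (n + 1) → α) (b : Fin n → α) (i : Fin (n + 1)) :
    interleave a b ⟨2 * i, by omega⟩ = a i := by
  simp [interleave]

@[simp]
theorem interleave_two_mul_add_one (a : Fin (n + 1) → α) (b : Fin n → α) (i : Fin n) :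
    interleave a b ⟨2 * i + 1, by omega⟩ = b i := by
  simp [interleave, Nat.add_mod, Nat.add_div]

@[simp]
theorem interleave_zero (a : Fin (n + 1) → α) (b : Fin n → α) : interleave a b 0 = a 0 := by
  simp [interleave]

theorem interleave_mem {s : Set α} {a : Fin (n + 1) → α} {b : Fin n → α} (ha : ∀ i, a i ∈ s)
    (hb : ∀ i, b i ∈ s) (j : Fin (2 * n + 1)) : interleave a b j ∈ s := by
  unfold interleave
  split_ifs
  exacts [ha _, hb _]

theorem strictMono_interleave [Preorder α] {a : Fin (n + 1) → α} {b : Fin n → α}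
    (h : ∀ i : Fin n, a i.castSucc < b i ∧ b i < a i.succ) : StrictMono (interleave a b) := by
  refine strictMono_iff_lt_succ.2 fun j => ?_
  obtain ⟨i, hi | hi⟩ := Nat.even_or_odd' j
  · have hin : i < n := by omega
    have h1 : j.castSucc = ⟨2 * (⟨i, by omega⟩ : Fin (n + 1)), by omega⟩ := Fin.ext hi
    have h2 : j.succ = ⟨2 * (⟨i, hin⟩ : Fin n) + 1, by omega⟩ := Fin.ext (by simp [hi])
    rw [h1, h2, interleave_two_mul, interleave_two_mul_add_one]
    exact (h ⟨i, hin⟩).1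
  · have hin : i < n := by omega
    have h1 : j.castSucc = ⟨2 * (⟨i, hin⟩ : Fin n) + 1, by omega⟩ := Fin.ext hi
    have h2 : j.succ = ⟨2 * (⟨i + 1, by omega⟩ : Fin (n + 1)), by omega⟩ :=
      Fin.ext (by simp [hi]; ring)
    rw [h1, h2, interleave_two_mul, interleave_two_mul_add_one]
    exact (h ⟨i, hin⟩).2

theorem sum_univ_two_mul_add_one {M : Type*} [AddCommMonoid M] (f : Fin (2 * n + 1) → M) :
    ∑ j, f j = ∑ i : Fin (n + 1), f ⟨2 * i, by omega⟩ + ∑ i : Fin n, f ⟨2 * i + 1, by omega⟩ := by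
  let e : Fin (n + 1) ⊕ Fin n → Fin (2 * n + 1) :=
    Sum.elim (fun i => ⟨2 * i, by omega⟩) (fun i => ⟨2 * i + 1, by omega⟩)
  have he : e.Bijective := by
    refine (Fintype.bijective_iff_injective_and_card e).2 ⟨?_, by simp; ring⟩
    rintro (i | i) (k | k) h <;> simp [e, Fin.ext_iff] at h ⊢ <;> omega
  exact (Fintype.sum_bijective e he _ _ fun _ => rfl).symm.trans (Fintype.sum_sum_type _)

end Fin

open Matrix

theorem Matrix.det_mul_apply_of_mulVec_eq_single {ι R : Type*} [Fintype ι] [DecidableEq ι]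
    [CommRing R] {M : Matrix ι ι R} {v : ι → R} {j : ι} {s : R} (h : M *ᵥ v = Pi.single j s)
    (i : ι) : M.det * v i = M.adjugate i j * s := by
  have := congrFun (congrArg (M.adjugate *ᵥ ·) h) i
  simpa [mulVec_mulVec, adjugate_mul, smul_mulVec, mulVec_single] using this

theorem ChebyshevSystem.neg_one_pow_mul_sum_pos {A B : ℝ} {m : ℕ} {u : Fin (m + 1) → ℝ → ℝ}
    (hu : ChebyshevSystem A B u) (hu' : ChebyshevSystem A B fun l : Fin m => u l.castSucc)
    {z : Fin (m + 1) → ℝ} (hz : StrictMono z) (hzAB : ∀ j, z j ∈ Set.Icc A B)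
    {v : Fin (m + 1) → ℝ} (hv : 0 < v 0)
    (hmom : ∀ l : Fin m, ∑ j, v j * u l.castSucc (z j) = 0) :
    0 < (-1) ^ m * ∑ j, v j * u (Fin.last m) (z j) := by
  set M : Matrix (Fin (m + 1)) (Fin (m + 1)) ℝ := of fun l j => u l (z j)
  set s := ∑ j, v j * u (Fin.last m) (z j)
  have hMv : M *ᵥ v = Pi.single (Fin.last m) s := by
    funext l
    induction l using Fin.lastCases with
    | last => simp [M, s, mulVec, dotProduct, mul_comm]
    | cast l =>
      rw [Pi.single_eq_of_ne (Fin.castSucc_lt_last l).ne, ← hmom l]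
      simp [M, mulVec, dotProduct, mul_comm]
  set D' := (of fun l j : Fin m => u l.castSucc (z j.succ)).det
  have hminor : M.adjugate 0 (Fin.last m) = (-1) ^ m * D' := by
    rw [adjugate_fin_succ_eq_det_submatrix, Fin.succAbove_last, Fin.succAbove_zero, Fin.val_last,
      Fin.val_zero, add_zero]
    rfl
  have hD' : 0 < D' := hu' (z ∘ Fin.succ) (hz.comp Fin.strictMono_succ) fun j => hzAB j.succ
  have hprod : 0 < (-1) ^ m * s * D' :=
    calc 0 < M.det * v 0 := mul_pos (hu z hz hzAB) hv
      _ = (-1) ^ m * s * D' := by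
        rw [det_mul_apply_of_mulVec_eq_single hMv, hminor]
        ring
  exact pos_of_mul_pos_left hprod hD'.le

theorem stmt_4_general (A B : ℝ) (n : ℕ) (Ψ : Fin (2 * n + 1) → ℝ → ℝ)
    (hcheb1 : ChebyshevSystem A B fun l : Fin (2 * n) => Ψ l.castSucc)
    (hcheb2 : ChebyshevSystem A B Ψ)
    (c : Fin n → ℝ) (ct : Fin (n + 1) → ℝ) (ω : Fin n → ℝ) (ωt : Fin (n + 1) → ℝ)
    (hωt : ∀ i, 0 < ωt i)
    (hmemc : ∀ i, c i ∈ Set.Icc A B) (hmemct : ∀ i, ct i ∈ Set.Icc A B)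
    (hord : ∀ i : Fin n, ct i.castSucc < c i ∧ c i < ct i.succ)
    (heq : ∀ l : Fin (2 * n),
      ∑ i, ω i * Ψ l.castSucc (c i) = ∑ i, ωt i * Ψ l.castSucc (ct i)) :
    ∑ i, ω i * Ψ (Fin.last (2 * n)) (c i)
      < ∑ i, ωt i * Ψ (Fin.last (2 * n)) (ct i) := by
  set z := Fin.interleave ct c
  set v := Fin.interleave ωt fun i => -ω i
  have hsum (f : ℝ → ℝ) :
      ∑ j, v j * f (z j) = ∑ i, ωt i * f (ct i) - ∑ i, ω i * f (c i) := by
    simp [Fin.sum_univ_two_mul_add_one, z, v, sub_eq_add_neg]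
  have hv0 : 0 < v 0 := by simpa [v] using hωt 0
  have key := hcheb2.neg_one_pow_mul_sum_pos hcheb1 (Fin.strictMono_interleave hord)
    (Fin.interleave_mem hmemct hmemc) hv0
    fun l => by rw [hsum, heq l, sub_self]
  rw [hsum, (even_two_mul n).neg_one_pow, one_mul] at key
  linarith

/-- Proposition 2 of the paper: `k = 2n`, `Ψ` lists `Ψ_0, …, Ψ_k` (so `2n + 1` functions). -/
theorem stmt_4 (A B : ℝ) (n : ℕ) (hn : 0 < n) (Ψ : Fin (2 * n + 1) → ℝ → ℝ)
    (hΨ0 : ∀ x : ℝ, Ψ 0 x = 1)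
    (hcont : ∀ i, ContinuousOn (Ψ i) (Set.Icc A B))
    (hcheb1 : ChebyshevSystem A B fun l : Fin (2 * n) => Ψ l.castSucc)
    (hcheb2 : ChebyshevSystem A B Ψ)
    (c : Fin n → ℝ) (ct : Fin (n + 1) → ℝ) (ω : Fin n → ℝ) (ωt : Fin (n + 1) → ℝ)
    (hω : ∀ i, 0 < ω i) (hωt : ∀ i, 0 < ωt i)
    (hmemc : ∀ i, c i ∈ Set.Icc A B) (hmemct : ∀ i, ct i ∈ Set.Icc A B)
    (hA : ct 0 = A) (hB : ct (Fin.last n) = B)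
    (hord : ∀ i : Fin n, ct i.castSucc < c i ∧ c i < ct i.succ)
    (heq : ∀ l : Fin (2 * n),
      ∑ i, ω i * Ψ l.castSucc (c i) = ∑ i, ωt i * Ψ l.castSucc (ct i)) :
    ∑ i, ω i * Ψ (Fin.last (2 * n)) (c i)
      < ∑ i, ωt i * Ψ (Fin.last (2 * n)) (ct i) :=
  stmt_4_general A B n Ψ hcheb1 hcheb2 c ct ω ωt hωt hmemc hmemct hord heq
end

section
/- Let Ψ_0 = 1, Ψ_1, ..., Ψ_k be k-times continuously differentiable functions on [A,B]. Define inductively f_{l,1} = Ψ_l' for l = 1,...,k, and f_{l,t} = (f_{l,t-1}/f_{t-1,t-1})' for 2 ≤ t ≤ l ≤ k. If f_{l,l}(c) > 0 for all c ∈ [A,B] and all l = 1,...,k, then {1, Ψ_1, ..., Ψ_k} is a Chebyshev system on [A,B]: for any A ≤ z_0 < z_1 < ... < z_k ≤ B, the determinant det[(Ψ_i(z_j))_{0≤i,j≤k}] > 0 (with Ψ_0 = 1). -/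
/-!
Subtracting consecutive columns and using `Ψ 0 = 1` reduces the determinant to the `k × k` one
with entries `Ψ (i+1) (z (j+1)) - Ψ (i+1) (z j) = ∫ in z j..z (j+1), f (i+1) 1`. The determinant
is linear in each column, so this is an iterated integral of `det (f (i+1) 1 (t j))` over the box
`∏ j, (z j, z (j+1))`, on which `t` is strictly increasing. Factoring `f 1 1 (t j) > 0` out of each
column leaves the determinant of `1, f 2 1 / f 1 1, …, f (k+1) 1 / f 1 1` at `t`; this system has
divided derivatives `f (l+1) (t+1)`, so induction on `k` applies. The integrands are continuous
because the `f l t` are `C^(k-t)`, by the smoothness of the `Ψ l`.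
-/

open Set MeasureTheory

namespace Matrix

variable {n : Type*} [Fintype n] [DecidableEq n]

noncomputable def detUpdateColCLM (M : Matrix n n ℝ) (m : n) : (n → ℝ) →L[ℝ] ℝ :=
  LinearMap.toContinuousLinearMap
    { toFun := fun u => (M.updateCol m u).det
      map_add' := det_updateCol_add M m
      map_smul' := fun s u => by simpa using det_updateCol_smul M m s u }

theorem det_updateCol_intervalIntegral (M : Matrix n n ℝ) (m : n) {a b : ℝ}
    {w : n → ℝ → ℝ} (hw : ∀ i, IntervalIntegrable (w i) volume a b) :
    (M.updateCol m fun i => ∫ s in a..b, w i s).det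
      = ∫ s in a..b, (M.updateCol m fun i => w i s).det := by
  have hw' : IntervalIntegrable (fun s i => w i s) volume a b :=
    ⟨integrable_pi_iff.2 fun i => (hw i).1, integrable_pi_iff.2 fun i => (hw i).2⟩
  have hcol : (fun i => ∫ s in a..b, w i s) = ∫ s in a..b, fun i => w i s :=
    funext fun i =>
      ((ContinuousLinearMap.proj (R := ℝ) (φ := fun _ : n => ℝ) i).intervalIntegral_comp_comm hw')
  rw [hcol]
  exact ((M.detUpdateColCLM m).intervalIntegral_comp_comm hw').symm

theorem det_intervalIntegral_pos {v : n → ℝ → ℝ} {a b : n → ℝ} (hab : ∀ j, a j < b j)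
    (hv : ∀ i j, ContinuousOn (v i) (Icc (a j) (b j)))
    (hpos : ∀ t : n → ℝ, (∀ j, t j ∈ Ioo (a j) (b j)) → 0 < (of fun i j => v i (t j)).det) :
    0 < (of fun i j => ∫ s in a j..b j, v i s).det := by
  suffices h : ∀ S : Finset n, ∀ t : n → ℝ, (∀ j, t j ∈ Ioo (a j) (b j)) →
      0 < (of fun i j => if j ∈ S then ∫ s in a j..b j, v i s else v i (t j)).det by
    simpa using h Finset.univ (fun j => (nonempty_Ioo.2 (hab j)).some)
      fun j => (nonempty_Ioo.2 (hab j)).some_mem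
  intro S
  induction S using Finset.induction_on with
  | empty => simpa using hpos
  | insert m S hm ih =>
    intro t ht
    set M : Matrix n n ℝ := of fun i j => if j ∈ S then ∫ s in a j..b j, v i s else v i (t j)
    have hvm : ∀ i, ContinuousOn (v i) (uIcc (a m) (b m)) := by
      simpa only [uIcc_of_le (hab m).le] using fun i => hv i m
    have hcol : (of fun i j => if j ∈ insert m S then ∫ s in a j..b j, v i s else v i (t j))
        = M.updateCol m fun i => ∫ s in a m..b m, v i s := by
      ext i j
      by_cases hj : j = m
      · subst hj; simp
      · simp [M, hj]
    have hupdate : ∀ s, M.updateCol m (fun i => v i s)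
        = of fun i j => if j ∈ S then ∫ s in a j..b j, v i s else v i (Function.update t m s j) := by
      intro s
      ext i j
      by_cases hj : j = m
      · subst hj; simp [hm]
      · simp [M, hj]
    rw [hcol, det_updateCol_intervalIntegral M m fun i => (hvm i).intervalIntegrable]
    refine intervalIntegral.intervalIntegral_pos_of_pos_on ?_ (fun s hs => ?_) (hab m)
    · exact ((M.detUpdateColCLM m).continuous.comp_continuousOn
        (continuousOn_pi.2 hvm)).intervalIntegrable
    · rw [hupdate]
      refine ih _ fun j => ?_
      by_cases hj : j = m
      · subst hj; simpa using hs
      · simpa [hj] using ht j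

theorem det_eq_det_sub_castSucc_col {R : Type*} [CommRing R] {n : ℕ}
    (M : Matrix (Fin (n + 1)) (Fin (n + 1)) R) (hM : ∀ j, M 0 j = 1) :
    M.det = (of fun i j : Fin n => M i.succ j.succ - M i.succ j.castSucc).det := by
  set D : Matrix (Fin (n + 1)) (Fin (n + 1)) R :=
    of fun i => Fin.cons (M i 0) fun j => M i j.succ - M i j.castSucc
  calc M.det = D.det :=
        det_eq_of_forall_col_eq_smul_add_pred (fun _ => 1) (fun _ => rfl) fun i j => by simp [D]
    _ = (D.submatrix Fin.succ Fin.succ).det := by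
        rw [det_succ_row_zero, Fin.sum_univ_succ]
        simp [D, hM]
    _ = _ := rfl

end Matrix

theorem strictMono_of_mem_Ioo_castSucc_succ {α : Type*} [Preorder α] {n : ℕ}
    {z : Fin (n + 1) → α} (hz : Monotone z) {t : Fin n → α}
    (ht : ∀ j, t j ∈ Ioo (z j.castSucc) (z j.succ)) : StrictMono t :=
  fun i j hij => ((ht i).2.trans_le (hz (Fin.succ_le_castSucc_iff.2 hij))).trans (ht j).1

structure DividedDerivSystem (A B : ℝ) (k : ℕ) (Ψ : ℕ → ℝ → ℝ) (f : ℕ → ℕ → ℝ → ℝ) : Prop where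
  zero : ∀ x, Ψ 0 x = 1
  hasDerivAt_one : ∀ l, 1 ≤ l → l ≤ k → ∀ c ∈ Icc A B, HasDerivAt (Ψ l) (f l 1 c) c
  hasDerivAt_div : ∀ t l, 2 ≤ t → t ≤ l → l ≤ k → ∀ c ∈ Icc A B,
    HasDerivAt (fun x => f l (t - 1) x / f (t - 1) (t - 1) x) (f l t c) c
  diag_pos : ∀ l, 1 ≤ l → l ≤ k → ∀ c ∈ Icc A B, 0 < f l l c
  continuousOn : ∀ t l, 1 ≤ t → t ≤ l → l ≤ k → ContinuousOn (f l t) (Icc A B)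

namespace DividedDerivSystem

variable {A B : ℝ} {k : ℕ} {Ψ : ℕ → ℝ → ℝ} {f : ℕ → ℕ → ℝ → ℝ}

theorem reduce (h : DividedDerivSystem A B (k + 1) Ψ f) :
    DividedDerivSystem A B k (fun l x => if l = 0 then 1 else f (l + 1) 1 x / f 1 1 x)
      (fun l t => f (l + 1) (t + 1)) where
  zero x := if_pos rfl
  hasDerivAt_one l hl hlk c hc := by
    simpa [Nat.one_le_iff_ne_zero.1 hl] using h.hasDerivAt_div 2 (l + 1) le_rfl (by omega) (by omega) c hc
  hasDerivAt_div t l ht htl hlk c hc := by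
    simpa [Nat.sub_add_cancel (by omega : 1 ≤ t)] using
      h.hasDerivAt_div (t + 1) (l + 1) (by omega) (by omega) (by omega) c hc
  diag_pos l hl hlk := h.diag_pos (l + 1) (by omega) (by omega)
  continuousOn t l ht htl hlk := h.continuousOn (t + 1) (l + 1) (by omega) (by omega) (by omega)

theorem det_pos (h : DividedDerivSystem A B k Ψ f) (z : Fin (k + 1) → ℝ) (hz : StrictMono z)
    (hzI : ∀ j, z j ∈ Icc A B) : 0 < (Matrix.of fun i j : Fin (k + 1) => Ψ i (z j)).det := by
  induction k generalizing Ψ f with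
  | zero => simp [h.zero]
  | succ k ih =>
    have hlt : ∀ j : Fin (k + 1), z j.castSucc < z j.succ := fun j => hz j.castSucc_lt_succ
    have hsub : ∀ j : Fin (k + 1), Icc (z j.castSucc) (z j.succ) ⊆ Icc A B :=
      fun j => Icc_subset_Icc (hzI _).1 (hzI _).2
    have hftc : ∀ i j : Fin (k + 1), Ψ (i + 1) (z j.succ) - Ψ (i + 1) (z j.castSucc)
        = ∫ s in z j.castSucc..z j.succ, f (i + 1) 1 s := by
      intro i j
      have hcont : ContinuousOn (f (i + 1) 1) (uIcc (z j.castSucc) (z j.succ)) := by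
        rw [uIcc_of_le (hlt j).le]
        exact (h.continuousOn 1 (i + 1) le_rfl (by omega) (by omega)).mono (hsub j)
      refine (intervalIntegral.integral_eq_sub_of_hasDerivAt (fun x hx => ?_)
        hcont.intervalIntegrable).symm
      rw [uIcc_of_le (hlt j).le] at hx
      exact h.hasDerivAt_one (i + 1) (by omega) (by omega) x (hsub j hx)
    rw [Matrix.det_eq_det_sub_castSucc_col _ fun j => h.zero _]
    simp only [Matrix.of_apply, Fin.val_succ, hftc]
    refine Matrix.det_intervalIntegral_pos hlt
      (fun i j => (h.continuousOn 1 (i + 1) le_rfl (by omega) (by omega)).mono (hsub j))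
      fun t ht => ?_
    have htI : ∀ j, t j ∈ Icc A B := fun j => hsub j (Ioo_subset_Icc_self (ht j))
    have hf11 : ∀ j, 0 < f 1 1 (t j) := fun j => h.diag_pos 1 le_rfl (by omega) _ (htI j)
    have hfactor : (Matrix.of fun i j : Fin (k + 1) => f (i + 1) 1 (t j)) =
        Matrix.of fun i j => f 1 1 (t j) * (Matrix.of fun i j : Fin (k + 1) =>
          if (i : ℕ) = 0 then 1 else f (i + 1) 1 (t j) / f 1 1 (t j)) i j := by
      ext i j
      simp only [Matrix.of_apply]
      split_ifs with hi
      · simp [hi]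
      · exact (mul_div_cancel₀ _ (hf11 j).ne').symm
    rw [hfactor, Matrix.det_mul_row]
    exact mul_pos (Finset.prod_pos fun j _ => hf11 j)
      (ih h.reduce t (strictMono_of_mem_Ioo_castSucc_succ hz.monotone ht) htI)

end DividedDerivSystem

theorem ContDiffOn.contDiffOn_of_hasDerivAt {s : Set ℝ} (hs : UniqueDiffOn ℝ s) {g g' : ℝ → ℝ}
    {m : ℕ} (hg : ContDiffOn ℝ (m + 1) g s) (hg' : ∀ c ∈ s, HasDerivAt g (g' c) c) :
    ContDiffOn ℝ m g' s :=
  (hg.derivWithin hs le_rfl).congr fun c hc =>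
    ((hg' c hc).hasDerivWithinAt.derivWithin (hs c hc)).symm

theorem contDiffOn_dividedDeriv {s : Set ℝ} (hs : UniqueDiffOn ℝ s) {k : ℕ}
    {Ψ : ℕ → ℝ → ℝ} {f : ℕ → ℕ → ℝ → ℝ} (hsmooth : ∀ l ≤ k, ContDiffOn ℝ k (Ψ l) s)
    (hf1 : ∀ l, 1 ≤ l → l ≤ k → ∀ c ∈ s, HasDerivAt (Ψ l) (f l 1 c) c)
    (hft : ∀ t l, 2 ≤ t → t ≤ l → l ≤ k → ∀ c ∈ s,
      HasDerivAt (fun x => f l (t - 1) x / f (t - 1) (t - 1) x) (f l t c) c)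
    (hne : ∀ l, 1 ≤ l → l ≤ k → ∀ c ∈ s, f l l c ≠ 0) :
    ∀ t l, 1 ≤ t → t ≤ l → l ≤ k → ContDiffOn ℝ (k - t : ℕ) (f l t) s := by
  intro t
  induction t with
  | zero => omega
  | succ t ih =>
    intro l _ htl hlk
    rcases Nat.eq_zero_or_pos t with rfl | ht
    · exact ((hsmooth l hlk).of_le (by norm_cast; omega)).contDiffOn_of_hasDerivAt hs
        (hf1 l (by omega) hlk)
    · have hquot : ContDiffOn ℝ (k - (t + 1) + 1 : ℕ) (fun x => f l t x / f t t x) s := by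
        rw [show k - (t + 1) + 1 = k - t by omega]
        exact (ih l ht (by omega) hlk).div (ih t ht le_rfl (by omega)) (hne t ht (by omega))
      exact hquot.contDiffOn_of_hasDerivAt hs (hft (t + 1) l (by omega) htl hlk)

/-- Proposition 3 of the paper (positive case). `f l t` are the iterated divided
derivatives: `f l 1 = Ψ_l'` and `f l t = (f l (t-1) / f (t-1) (t-1))'`. -/
theorem stmt_6 (A B : ℝ) (k : ℕ) (hk : 0 < k) (Ψ : ℕ → ℝ → ℝ)
    (hΨ0 : ∀ x : ℝ, Ψ 0 x = 1)
    (hsmooth : ∀ l ≤ k, ContDiffOn ℝ k (Ψ l) (Set.Icc A B))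
    (f : ℕ → ℕ → ℝ → ℝ)
    (hf1 : ∀ l, 1 ≤ l → l ≤ k → ∀ c ∈ Set.Icc A B, HasDerivAt (Ψ l) (f l 1 c) c)
    (hft : ∀ t l, 2 ≤ t → t ≤ l → l ≤ k → ∀ c ∈ Set.Icc A B,
      HasDerivAt (fun x => f l (t - 1) x / f (t - 1) (t - 1) x) (f l t c) c)
    (hpos : ∀ l, 1 ≤ l → l ≤ k → ∀ c ∈ Set.Icc A B, 0 < f l l c) :
    ∀ z : Fin (k + 1) → ℝ, StrictMono z → (∀ i, z i ∈ Set.Icc A B) →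
      0 < (Matrix.of fun i j : Fin (k + 1) => Ψ (i : ℕ) (z j)).det := by
  intro z hz hzI
  have hAB : A < B := by
    have : NeZero k := ⟨hk.ne'⟩
    exact ((hzI 0).1.trans_lt (hz Fin.last_pos')).trans_le (hzI (Fin.last k)).2
  have hcont : ∀ t l, 1 ≤ t → t ≤ l → l ≤ k → ContinuousOn (f l t) (Icc A B) :=
    fun t l h1 h2 h3 => (contDiffOn_dividedDeriv (uniqueDiffOn_Icc hAB) hsmooth hf1 hft
      (fun l h1 h2 c hc => (hpos l h1 h2 c hc).ne') t l h1 h2 h3).continuousOn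
  exact DividedDerivSystem.det_pos ⟨hΨ0, hf1, hft, hpos, hcont⟩ z hz hzI
end

section
/- Let Ψ_0 = 1, Ψ_1, ..., Ψ_k be k-times differentiable functions on [A,B] with iterated divided derivatives f_{l,l} as defined by f_{l,1} = Ψ_l' and f_{l,t} = (f_{l,t-1}/f_{t-1,t-1})'. If f_{l,l} > 0 on [A,B] for l = 1,...,k-1 and f_{k,k} < 0 on [A,B], then {1, Ψ_1, ..., Ψ_{k-1}, −Ψ_k} is a Chebyshev system on [A,B]. -/
/-!
Subtracting consecutive columns and using `Ψ₀ = 1`, the determinant `det (Ψᵢ(zⱼ))` becomes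
`det (∫_{z_j}^{z_{j+1}} Ψ'_{i+1})`, which by multilinearity is positive as soon as
`det (Ψ'_{i+1}(tⱼ)) > 0` for all increasing `t`. Factoring `f₁₁(tⱼ) > 0` out of each column leaves
the system `1, f₂₁/f₁₁, …, f_{k,1}/f₁₁`, whose divided derivatives are `f_{l+1,t+1}`, so induction
on `k` shows that positivity of every `f_{l,l}` makes `Ψ` a Chebyshev system. Replacing `Ψₖ` by
`-Ψₖ` negates `f_{k,t}` for all `t` and nothing else, which reduces the theorem to that case.
-/

open Set Function

theorem MultilinearMap.map_intervalIntegral_pos {ι E : Type*} [Fintype ι] [DecidableEq ι]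
    [NormedAddCommGroup E] [NormedSpace ℝ E] [FiniteDimensional ℝ E]
    (Φ : MultilinearMap ℝ (fun _ : ι => E) ℝ) (F : ι → ℝ → E) {a b : ι → ℝ}
    (hab : ∀ j, a j < b j) (hF : ∀ j, ContinuousOn (F j) (Icc (a j) (b j)))
    (hpos : ∀ t : ι → ℝ, (∀ j, t j ∈ Ioo (a j) (b j)) → 0 < Φ fun j => F j (t j)) :
    0 < Φ fun j => ∫ x in a j..b j, F j x := by
  have : CompleteSpace E := FiniteDimensional.complete ℝ E
  suffices key : ∀ S : Finset ι, ∀ t : ι → ℝ, (∀ j ∉ S, t j ∈ Ioo (a j) (b j)) →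
      0 < Φ fun j => if j ∈ S then ∫ x in a j..b j, F j x else F j (t j) by
    simpa using key Finset.univ a (by simp)
  intro S
  induction S using Finset.induction_on with
  | empty => simpa using hpos
  | @insert j₀ S hj₀ ih =>
    intro t ht
    let L := LinearMap.toContinuousLinearMap <| Φ.toLinearMap
      (fun j => if j ∈ S then ∫ x in a j..b j, F j x else F j (t j)) j₀
    have hL : ∀ v, L v = Φ fun j =>
        if j ∈ S then ∫ x in a j..b j, F j x else update (fun j => F j (t j)) j₀ v j := by
      intro v
      simp only [L, LinearMap.coe_toContinuousLinearMap', MultilinearMap.toLinearMap_apply]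
      congr 1
      ext j
      by_cases hj : j = j₀
      · subst hj; simp [hj₀]
      · simp [hj]
    have hint : IntervalIntegrable (F j₀) MeasureTheory.volume (a j₀) (b j₀) :=
      ((hF j₀).mono (by rw [uIcc_of_le (hab j₀).le])).intervalIntegrable
    have hinsert : (Φ fun j => if j ∈ insert j₀ S then ∫ x in a j..b j, F j x else F j (t j)) =
        ∫ x in a j₀..b j₀, L (F j₀ x) := by
      rw [L.intervalIntegral_comp_comm hint, hL]
      congr 1
      ext j
      by_cases hj : j = j₀
      · subst hj; simp [hj₀]
      · simp [hj]
    rw [hinsert]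
    refine intervalIntegral.intervalIntegral_pos_of_pos_on ?_ (fun x hx => ?_) (hab j₀)
    · exact (L.continuous.comp_continuousOn (hF j₀)).intervalIntegrable_of_Icc (hab j₀).le
    · rw [hL]
      convert ih (update t j₀ x) (fun j hj => ?_) using 4 with j
      · by_cases hj : j = j₀
        · subst hj; simp
        · simp [hj]
      · by_cases hj' : j = j₀
        · subst hj'; simpa using hx
        · simpa [hj'] using ht j (by simp [hj', hj])

theorem Matrix.det_intervalIntegral_pos_s7 {ι : Type*} [Fintype ι] [DecidableEq ι]
    (g : ι → ℝ → ℝ) {a b : ι → ℝ} (hab : ∀ j, a j < b j)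
    (hg : ∀ i j, ContinuousOn (g i) (Icc (a j) (b j)))
    (hpos : ∀ t : ι → ℝ, (∀ j, t j ∈ Ioo (a j) (b j)) →
      0 < (Matrix.of fun i j => g i (t j)).det) :
    0 < (Matrix.of fun i j => ∫ x in a j..b j, g i x).det := by
  have hG : ∀ j, ContinuousOn (fun x i => g i x) (Icc (a j) (b j)) :=
    fun j => continuousOn_pi.2 fun i => hg i j
  have hrow : ∀ j, (∫ x in a j..b j, fun i => g i x) = fun i => ∫ x in a j..b j, g i x := by
    intro j
    ext i
    exact ((ContinuousLinearMap.proj (R := ℝ) (φ := fun _ : ι => ℝ) i).intervalIntegral_comp_comm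
      ((hG j).intervalIntegrable_of_Icc (hab j).le)).symm
  have h := (Matrix.detRowAlternating (R := ℝ) (n := ι)).toMultilinearMap.map_intervalIntegral_pos
    (fun j x i => g i x) hab hG fun t ht => by
      have := hpos t ht
      rwa [← Matrix.det_transpose] at this
  simp only [hrow] at h
  rw [← Matrix.det_transpose]
  exact h

theorem Matrix.det_eq_det_sub_of_row_zero_eq_one {R : Type*} [CommRing R] {n : ℕ}
    (M : Matrix (Fin (n + 1)) (Fin (n + 1)) R) (hM : ∀ j, M 0 j = 1) :
    M.det = (Matrix.of fun i j : Fin n => M i.succ j.succ - M i.succ j.castSucc).det := by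
  let D : Matrix (Fin (n + 1)) (Fin (n + 1)) R :=
    Matrix.of fun i => Fin.cases (M i 0) fun j => M i j.succ - M i j.castSucc
  have hD : M.det = D.det :=
    Matrix.det_eq_of_forall_col_eq_smul_add_pred (fun _ => 1) (fun i => rfl)
      (fun i j => by simp [D])
  rw [hD, Matrix.det_succ_row_zero, Fin.sum_univ_succ]
  simp [D, hM, Matrix.submatrix]

theorem ContDiffOn.contDiffOn_of_hasDerivAt_s7 {s : Set ℝ} {u v : ℝ → ℝ} {n : ℕ}
    (hu : ContDiffOn ℝ (n + 1) u s) (hs : UniqueDiffOn ℝ s)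
    (huv : ∀ x ∈ s, HasDerivAt u (v x) x) : ContDiffOn ℝ n v s :=
  (hu.derivWithin hs le_rfl).congr fun x hx =>
    ((huv x hx).hasDerivWithinAt.derivWithin (hs x hx)).symm

def IsChebyshevOn (s : Set ℝ) (k : ℕ) (u : ℕ → ℝ → ℝ) : Prop :=
  ∀ z : Fin (k + 1) → ℝ, StrictMono z → (∀ j, z j ∈ s) →
    0 < (Matrix.of fun i j : Fin (k + 1) => u i (z j)).det

structure IsIteratedDividedDerivs (s : Set ℝ) (k : ℕ) (Ψ : ℕ → ℝ → ℝ)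
    (f : ℕ → ℕ → ℝ → ℝ) : Prop where
  hasDerivAt_one : ∀ l, 1 ≤ l → l ≤ k → ∀ x ∈ s, HasDerivAt (Ψ l) (f l 1 x) x
  hasDerivAt_div : ∀ t l, 2 ≤ t → t ≤ l → l ≤ k → ∀ x ∈ s,
    HasDerivAt (fun y => f l (t - 1) y / f (t - 1) (t - 1) y) (f l t x) x

namespace IsChebyshevOn

variable {s : Set ℝ} {k : ℕ} {u v : ℕ → ℝ → ℝ}

theorem congr (hu : IsChebyshevOn s k u) (huv : ∀ l ≤ k, ∀ x ∈ s, u l x = v l x) :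
    IsChebyshevOn s k v := by
  intro z hz hzs
  convert hu z hz hzs using 3
  ext i j
  exact (huv i (Nat.lt_succ_iff.1 i.isLt) _ (hzs j)).symm

theorem mul (hu : IsChebyshevOn s k u) {w : ℝ → ℝ} (hw : ∀ x ∈ s, 0 < w x) :
    IsChebyshevOn s k fun l x => w x * u l x := by
  intro z hz hzs
  have h := Matrix.det_mul_row (fun j => w (z j)) (Matrix.of fun i j : Fin (k + 1) => u i (z j))
  simp only [Matrix.of_apply] at h
  beta_reduce
  rw [h]
  exact mul_pos (Finset.prod_pos fun j _ => hw _ (hzs j)) (hu z hz hzs)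

theorem of_hasDerivAt [s.OrdConnected] (hu0 : ∀ x ∈ s, u 0 x = 1)
    (hderiv : ∀ l ≤ k, ∀ x ∈ s, HasDerivAt (u (l + 1)) (v l x) x)
    (hcont : ∀ l ≤ k, ContinuousOn (v l) s) (hv : IsChebyshevOn s k v) :
    IsChebyshevOn s (k + 1) u := by
  intro z hz hzs
  have hzlt : ∀ j : Fin (k + 1), z j.castSucc < z j.succ := fun j => hz j.castSucc_lt_succ
  have hsub : ∀ j : Fin (k + 1), Icc (z j.castSucc) (z j.succ) ⊆ s :=
    fun j => Set.OrdConnected.out ‹_› (hzs _) (hzs _)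
  have hFTC : ∀ i j : Fin (k + 1), u (i + 1) (z j.succ) - u (i + 1) (z j.castSucc) =
      ∫ x in z j.castSucc..z j.succ, v i x := by
    intro i j
    refine (intervalIntegral.integral_eq_sub_of_hasDerivAt (fun x hx => ?_)
      ((hcont i i.is_le).mono (hsub j) |>.intervalIntegrable_of_Icc (hzlt j).le)).symm
    rw [uIcc_of_le (hzlt j).le] at hx
    exact hderiv i i.is_le x (hsub j hx)
  rw [Matrix.det_eq_det_sub_of_row_zero_eq_one _ fun j => hu0 _ (hzs j)]
  simp only [Matrix.of_apply, Fin.val_succ, hFTC]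
  refine Matrix.det_intervalIntegral_pos_s7 _ hzlt (fun i j => (hcont i i.is_le).mono (hsub j))
    fun t ht => hv t (fun j j' hjj' => ?_) fun j => hsub j (Ioo_subset_Icc_self (ht j))
  calc t j < z j.succ := (ht j).2
    _ ≤ z j'.castSucc := hz.monotone (Fin.succ_le_castSucc_iff.2 hjj')
    _ < t j' := (ht j').1

end IsChebyshevOn

namespace IsIteratedDividedDerivs

variable {s : Set ℝ} {k : ℕ} {Ψ : ℕ → ℝ → ℝ} {f : ℕ → ℕ → ℝ → ℝ}

theorem shift (hf : IsIteratedDividedDerivs s (k + 1) Ψ f) :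
    IsIteratedDividedDerivs s k (fun l x => f (l + 1) 1 x / f 1 1 x)
      (fun l t => f (l + 1) (t + 1)) where
  hasDerivAt_one l _ hl := hf.hasDerivAt_div 2 (l + 1) le_rfl (by omega) (by omega)
  hasDerivAt_div t l ht htl hl := by
    have e : t - 1 + 1 = t + 1 - 1 := by omega
    simpa only [e] using hf.hasDerivAt_div (t + 1) (l + 1) (by omega) (by omega) (by omega)

theorem update_neg (hf : IsIteratedDividedDerivs s k Ψ f) :
    IsIteratedDividedDerivs s k (update Ψ k (-Ψ k)) (update f k (-f k)) where
  hasDerivAt_one l hl hlk x hx := by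
    rcases eq_or_ne l k with rfl | hne
    · simpa using (hf.hasDerivAt_one l hl hlk x hx).neg
    · simpa [hne] using hf.hasDerivAt_one l hl hlk x hx
  hasDerivAt_div t l ht htl hlk x hx := by
    have hden : t - 1 ≠ k := by omega
    rcases eq_or_ne l k with rfl | hne
    · simp only [update_self, update_of_ne hden, Pi.neg_apply, neg_div]
      exact (hf.hasDerivAt_div t l ht htl hlk x hx).neg
    · simpa [hne, hden] using hf.hasDerivAt_div t l ht htl hlk x hx

theorem contDiffOn (hf : IsIteratedDividedDerivs s k Ψ f) (hs : UniqueDiffOn ℝ s)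
    (hΨ : ∀ l ≤ k, ContDiffOn ℝ k (Ψ l) s) (hden : ∀ l, 1 ≤ l → l < k → ∀ x ∈ s, f l l x ≠ 0) :
    ∀ t l, 1 ≤ t → t ≤ l → l ≤ k → ContDiffOn ℝ (k - t : ℕ) (f l t) s := by
  intro t
  induction t with
  | zero => intro l h; omega
  | succ t ih =>
    intro l _ htl hlk
    rcases Nat.eq_zero_or_pos t with rfl | ht
    · exact ((hΨ l hlk).of_le (by exact_mod_cast (by omega : k - 1 + 1 ≤ k))
        |>.contDiffOn_of_hasDerivAt hs (hf.hasDerivAt_one l (by omega) hlk))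
    · have hquot : ContDiffOn ℝ (k - t : ℕ) (fun x => f l t x / f t t x) s :=
        (ih l ht (by omega) hlk).div (ih t ht le_rfl (by omega)) (hden t ht (by omega))
      exact (hquot.of_le (by exact_mod_cast (by omega : k - (t + 1) + 1 ≤ k - t))
        |>.contDiffOn_of_hasDerivAt hs (hf.hasDerivAt_div (t + 1) l (by omega) htl hlk))

theorem isChebyshevOn [s.OrdConnected] (hΨ0 : ∀ x ∈ s, Ψ 0 x = 1)
    (hf : IsIteratedDividedDerivs s k Ψ f)
    (hcont : ∀ l t, 1 ≤ t → t ≤ l → l ≤ k → ContinuousOn (f l t) s)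
    (hpos : ∀ l, 1 ≤ l → l ≤ k → ∀ x ∈ s, 0 < f l l x) : IsChebyshevOn s k Ψ := by
  induction k generalizing Ψ f with
  | zero =>
    intro z _ hzs
    simp [hΨ0 _ (hzs 0)]
  | succ k ih =>
    have hf11 : ∀ x ∈ s, 0 < f 1 1 x := hpos 1 le_rfl (by omega)
    have hred : IsChebyshevOn s k fun l x => f (l + 1) 1 x / f 1 1 x :=
      ih (fun x hx => div_self (hf11 x hx).ne') hf.shift
        (fun l t ht htl hlk => hcont (l + 1) (t + 1) (by omega) (by omega) (by omega))
        (fun l hl hlk => hpos (l + 1) (by omega) (by omega))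
    refine IsChebyshevOn.of_hasDerivAt hΨ0
      (fun l hl => hf.hasDerivAt_one (l + 1) (by omega) (by omega))
      (fun l hl => hcont (l + 1) 1 le_rfl (by omega) (by omega)) ?_
    exact (hred.mul hf11).congr fun l _ x hx => mul_div_cancel₀ _ (hf11 x hx).ne'

end IsIteratedDividedDerivs

/-- Proposition 3 of the paper (negative case): if `f l l > 0` for `l = 1, …, k-1` and
`f k k < 0` on `[A,B]`, then `{1, Ψ_1, …, Ψ_{k-1}, -Ψ_k}` is a Chebyshev system. -/
theorem stmt_7 (A B : ℝ) (k : ℕ) (hk : 0 < k) (Ψ : ℕ → ℝ → ℝ)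
    (hΨ0 : ∀ x : ℝ, Ψ 0 x = 1)
    (hsmooth : ∀ l ≤ k, ContDiffOn ℝ k (Ψ l) (Set.Icc A B))
    (f : ℕ → ℕ → ℝ → ℝ)
    (hf1 : ∀ l, 1 ≤ l → l ≤ k → ∀ c ∈ Set.Icc A B, HasDerivAt (Ψ l) (f l 1 c) c)
    (hft : ∀ t l, 2 ≤ t → t ≤ l → l ≤ k → ∀ c ∈ Set.Icc A B,
      HasDerivAt (fun x => f l (t - 1) x / f (t - 1) (t - 1) x) (f l t c) c)
    (hpos : ∀ l, 1 ≤ l → l ≤ k - 1 → ∀ c ∈ Set.Icc A B, 0 < f l l c)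
    (hneg : ∀ c ∈ Set.Icc A B, f k k c < 0) :
    ∀ z : Fin (k + 1) → ℝ, StrictMono z → (∀ i, z i ∈ Set.Icc A B) →
      0 < (Matrix.of fun i j : Fin (k + 1) =>
        if (i : ℕ) = k then -Ψ k (z j) else Ψ (i : ℕ) (z j)).det := by
  intro z hz hzs
  have hf : IsIteratedDividedDerivs (Icc A B) k Ψ f := ⟨hf1, hft⟩
  have hAB : A < B := by
    have h0 : (0 : Fin (k + 1)) < Fin.last k := by rw [Fin.lt_def]; simpa using hk
    linarith [(hzs 0).1, (hzs (Fin.last k)).2, hz h0]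
  have hcont : ∀ l t, 1 ≤ t → t ≤ l → l ≤ k → ContinuousOn (f l t) (Icc A B) :=
    fun l t ht htl hlk => (hf.contDiffOn (uniqueDiffOn_Icc hAB) hsmooth
      (fun l hl hlk x hx => (hpos l hl (by omega) x hx).ne') t l ht htl hlk).continuousOn
  have hcheb := hf.update_neg.isChebyshevOn (fun x _ => by simpa [hk.ne] using hΨ0 x)
    (fun l t ht htl hlk => by
      rcases eq_or_ne l k with rfl | hne
      · simpa using (hcont l t ht htl hlk).neg
      · simpa [hne] using hcont l t ht htl hlk)
    (fun l hl hlk x hx => by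
      rcases eq_or_ne l k with rfl | hne
      · simpa using hneg x hx
      · simpa [hne] using hpos l hl (by omega) x hx)
    z hz hzs
  convert hcheb using 3
  ext i j
  by_cases hi : (i : ℕ) = k <;> simp [hi]
end

section
/- For a > 0, the family of six functions {1, e^{ax}, e^{2ax}, x, −x e^{ax}, x e^{2ax}} is a Chebyshev system on any interval [A,B]: for any A ≤ z_0 < z_1 < ... < z_5 ≤ B, the 6×6 determinant with rows given by these functions evaluated at z_0,...,z_5 is strictly positive. -/
/-!
A nontrivial combination `∑ₖ (pₖ + qₖ x) e^{cₖ x}` of `m` exponentials with distinct rates has at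
most `2m - 1` real zeros: multiplying by `e^{-c₀ x}` and differentiating twice removes the `k = 0`
term and, by Rolle, costs only two zeros. Hence the determinant never vanishes for `a > 0`, and
by continuity in `a` its sign is that for `a → ∞`. There the Leibniz expansion is dominated, by
the rearrangement inequality, by the permutations that pair the rows `1, x` with `z₀, z₁`, the rows
`e^{ax}, -x e^{ax}` with `z₂, z₃` and the rows `e^{2ax}, x e^{2ax}` with `z₄, z₅`; after division
by `e^{a (z₂ + z₃ + 2 z₄ + 2 z₅)}` the determinant tends to `(z₁ - z₀)(z₃ - z₂)(z₅ - z₄) > 0`.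
-/

open Real Filter Topology Finset Matrix

noncomputable def expPoly {m : ℕ} (c p q : Fin m → ℝ) (x : ℝ) : ℝ :=
  ∑ k, (p k + q k * x) * exp (c k * x)

theorem hasDerivAt_expPoly {m : ℕ} (c p q : Fin m → ℝ) (x : ℝ) :
    HasDerivAt (expPoly c p q) (expPoly c (c * p + q) (c * q) x) x := by
  have hterm : ∀ k, HasDerivAt (fun y => (p k + q k * y) * exp (c k * y))
      ((c k * p k + q k + c k * q k * x) * exp (c k * x)) x := fun k => by
    have hlin := ((hasDerivAt_id x).const_mul (q k)).const_add (p k)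
    have hexp := ((hasDerivAt_id x).const_mul (c k)).exp
    exact (hlin.fun_mul hexp).congr_deriv (by simp only [id]; ring)
  exact HasDerivAt.fun_sum fun k _ => hterm k

theorem expPoly_fin_succ {m : ℕ} (c p q : Fin (m + 1) → ℝ) (x : ℝ) :
    expPoly c p q x = (p 0 + q 0 * x) * exp (c 0 * x)
      + expPoly (Fin.tail c) (Fin.tail p) (Fin.tail q) x :=
  Fin.sum_univ_succ _

theorem expPoly_sub_const {m : ℕ} (c p q : Fin m → ℝ) (d x : ℝ) :
    expPoly (fun k => c k - d) p q x = exp (-(d * x)) * expPoly c p q x := by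
  simp only [expPoly, Finset.mul_sum, sub_mul, exp_sub, exp_neg]
  exact Finset.sum_congr rfl fun k _ => by ring

theorem expPoly_zero_coeff {m : ℕ} (c : Fin m → ℝ) (x : ℝ) : expPoly c 0 0 x = 0 := by
  simp [expPoly]

theorem exists_strictMono_zeros_of_hasDerivAt {f f' : ℝ → ℝ} (hf : ∀ x, HasDerivAt f (f' x) x)
    {n : ℕ} {z : Fin (n + 1) → ℝ} (hz : StrictMono z) (hfz : ∀ i, f (z i) = 0) :
    ∃ w : Fin n → ℝ, StrictMono w ∧ ∀ i, f' (w i) = 0 := by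
  have hcont : Continuous f := continuous_iff_continuousAt.2 fun x => (hf x).continuousAt
  have hrolle : ∀ i : Fin n, ∃ w ∈ Set.Ioo (z i.castSucc) (z i.succ), f' w = 0 := fun i =>
    exists_hasDerivAt_eq_zero (hz i.castSucc_lt_succ) hcont.continuousOn (by rw [hfz, hfz])
      fun x _ => hf x
  choose w hw hw0 using hrolle
  refine ⟨w, fun i j hij => ?_, hw0⟩
  calc w i < z i.succ := (hw i).2
    _ ≤ z j.castSucc := hz.monotone (Fin.succ_le_castSucc_iff.2 hij)
    _ < w j := (hw j).1

theorem eq_zero_of_linear_eq_zero {p q x y : ℝ} (hxy : x ≠ y) (hx : p + q * x = 0)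
    (hy : p + q * y = 0) : p = 0 ∧ q = 0 := by
  have hq : q = 0 := by
    have : q * (x - y) = 0 := by linear_combination hx - hy
    exact (mul_eq_zero.1 this).resolve_right (sub_ne_zero.2 hxy)
  exact ⟨by simpa [hq] using hx, hq⟩

theorem expPoly_coeff_eq_zero {m : ℕ} {c : Fin m → ℝ} (hc : Function.Injective c)
    {p q : Fin m → ℝ} {z : Fin (2 * m) → ℝ} (hz : StrictMono z)
    (hzero : ∀ i, expPoly c p q (z i) = 0) : p = 0 ∧ q = 0 := by
  induction m with
  | zero => exact ⟨funext fun i => i.elim0, funext fun i => i.elim0⟩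
  | succ m ih =>
    set d : Fin (m + 1) → ℝ := fun k => c k - c 0 with hd
    -- `2 * (m + 1)` unfolds definitionally to `2 * m + 1 + 1`, the shape Rolle's step consumes
    have hz' : StrictMono (z : Fin (2 * m + 1 + 1) → ℝ) := hz
    obtain ⟨w, hw, hw0⟩ := exists_strictMono_zeros_of_hasDerivAt (hasDerivAt_expPoly d p q) hz'
      fun i => by rw [hd, expPoly_sub_const, hzero, mul_zero]
    obtain ⟨v, hv, hv0⟩ := exists_strictMono_zeros_of_hasDerivAt
      (hasDerivAt_expPoly d (d * p + q) (d * q)) hw hw0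
    have hd0 : d 0 = 0 := sub_self _
    have htail := ih (c := Fin.tail d)
      (fun i j h => Fin.succ_injective _ (hc (sub_left_injective h)))
      hv fun i => by simpa [expPoly_fin_succ, hd0] using hv0 i
    have hne : ∀ k : Fin m, d k.succ ≠ 0 := fun k => sub_ne_zero.2 (hc.ne (Fin.succ_ne_zero k))
    have htail_pq : ∀ k : Fin m, p k.succ = 0 ∧ q k.succ = 0 := fun k => by
      have h1 := congrFun htail.1 k
      have h2 := congrFun htail.2 k
      simp only [Fin.tail, Pi.add_apply, Pi.mul_apply, Pi.zero_apply] at h1 h2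
      have hq : q k.succ = 0 := by simpa [hne k] using h2
      exact ⟨by simpa [hq, hne k] using h1, hq⟩
    have hhead : ∀ x, expPoly c p q x = (p 0 + q 0 * x) * exp (c 0 * x) := fun x => by
      have hp : Fin.tail p = 0 := funext fun k => (htail_pq k).1
      have hq : Fin.tail q = 0 := funext fun k => (htail_pq k).2
      rw [expPoly_fin_succ, hp, hq, expPoly_zero_coeff, add_zero]
    have hlin : ∀ i : Fin (2 * m + 1 + 1), p 0 + q 0 * z i = 0 := fun i => by
      simpa [hhead, exp_ne_zero] using hzero i
    obtain ⟨hp0, hq0⟩ := eq_zero_of_linear_eq_zero (hz' Fin.zero_lt_one).ne (hlin 0) (hlin 1)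
    exact ⟨funext fun k => Fin.cases hp0 (fun k => (htail_pq k).1) k,
      funext fun k => Fin.cases hq0 (fun k => (htail_pq k).2) k⟩

theorem sum_comp_perm_mul_lt_sum_mul {n : ℕ} {ν z : Fin n → ℝ} (hν : Monotone ν)
    (hz : StrictMono z) {ρ : Equiv.Perm (Fin n)} (hρ : ν ∘ ρ ≠ ν) :
    ∑ i, ν (ρ i) * z i < ∑ i, ν i * z i := by
  refine (hν.monovary hz.monotone).sum_comp_perm_smul_lt_sum_smul_iff.2 fun h => hρ ?_
  simpa using Tuple.unique_monotone (σ := ρ) (τ := 1) (hz.trans_monovary h) hν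

theorem tendsto_det_exp_mul_exp_neg {n : ℕ} (g : Fin n → Fin n → ℝ) {μ ν z : Fin n → ℝ}
    (τ : Equiv.Perm (Fin n)) (hτ : ∀ k, μ k = ν (τ k)) (hν : Monotone ν) (hz : StrictMono z) :
    Tendsto (fun b => (of fun k i => g k i * exp (b * (μ k * z i))).det
        * exp (-(b * ∑ i, ν i * z i)))
      atTop (𝓝 (of fun k i => if μ k = ν i then g k i else 0).det) := by
  simp only [det_apply', Finset.sum_mul]
  refine tendsto_finsetSum _ fun σ _ => ?_
  have hterm : ∀ b, (Equiv.Perm.sign σ : ℝ)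
        * (∏ i, of (fun k i => g k i * exp (b * (μ k * z i))) (σ i) i)
        * exp (-(b * ∑ i, ν i * z i))
      = (Equiv.Perm.sign σ : ℝ) * (∏ i, g (σ i) i)
        * exp (b * (∑ i, μ (σ i) * z i - ∑ i, ν i * z i)) := fun b => by
    simp only [of_apply, prod_mul_distrib, ← exp_sum, ← Finset.mul_sum]
    rw [mul_sub, sub_eq_add_neg, exp_add]
    ring
  simp only [hterm]
  by_cases hσ : ∀ i, μ (σ i) = ν i
  · simp only [hσ, sub_self, mul_zero, exp_zero, mul_one, of_apply, if_true]
    exact tendsto_const_nhds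
  · obtain ⟨i₀, hi₀⟩ := not_forall.1 hσ
    have hlt : ∑ i, μ (σ i) * z i < ∑ i, ν i * z i := by
      simp only [hτ]
      refine sum_comp_perm_mul_lt_sum_mul (ρ := σ.trans τ) hν hz fun h => hi₀ ?_
      rw [hτ]; exact congrFun h i₀
    have hlead : ∏ i, of (fun k i => if μ k = ν i then g k i else 0) (σ i) i = 0 :=
      prod_eq_zero (mem_univ i₀) (by rw [of_apply, if_neg hi₀])
    rw [hlead, mul_zero]
    simpa using ((tendsto_exp_atBot.comp
      (tendsto_id.atTop_mul_const_of_neg (sub_neg.2 hlt))).const_mul _)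

theorem IsPreconnected.pos_of_forall_ne_zero {X : Type*} [TopologicalSpace X] {s : Set X}
    (hs : IsPreconnected s) {l : Filter X} [l.NeBot] (hl : l ≤ 𝓟 s) {f : X → ℝ}
    (hf : ContinuousOn f s) (hne : ∀ x ∈ s, f x ≠ 0) (hev : ∀ᶠ x in l, 0 < f x)
    {a : X} (ha : a ∈ s) : 0 < f a := by
  refine lt_of_not_ge fun hle => ?_
  obtain ⟨x, hx, hfx⟩ := hs.intermediate_value₂_eventually₁ ha hl hf continuousOn_const hle
    (hev.mono fun _ h => h.le)
  exact hne x hx hfx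

noncomputable def chebRow (b : ℝ) : Fin 6 → ℝ → ℝ :=
  ![fun _ => 1,
    fun x => exp (b * x),
    fun x => exp (2 * b * x),
    fun x => x,
    fun x => -(x * exp (b * x)),
    fun x => x * exp (2 * b * x)]

noncomputable def chebMatrix (b : ℝ) (z : Fin 6 → ℝ) : Matrix (Fin 6) (Fin 6) ℝ :=
  of fun k j => chebRow b k (z j)

def chebRate : Fin 6 → ℝ := ![0, 1, 2, 0, 1, 2]

def chebSortedRate : Fin 6 → ℝ := ![0, 0, 1, 1, 2, 2]

def chebPrefactor : Fin 6 → ℝ → ℝ :=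
  ![fun _ => 1, fun _ => 1, fun _ => 1, fun x => x, fun x => -x, fun x => x]

noncomputable def chebSortPerm : Equiv.Perm (Fin 6) :=
  Equiv.ofBijective ![0, 2, 4, 1, 3, 5] (by decide)

theorem chebRate_eq_sortedRate (k : Fin 6) : chebRate k = chebSortedRate (chebSortPerm k) := by
  fin_cases k <;> rfl

theorem monotone_chebSortedRate : Monotone chebSortedRate := by
  simp [Fin.monotone_iff_le_succ, Fin.forall_fin_succ, chebSortedRate]

theorem chebMatrix_eq (b : ℝ) (z : Fin 6 → ℝ) :
    chebMatrix b z = of fun k i => chebPrefactor k (z i) * exp (b * (chebRate k * z i)) := by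
  ext k i
  fin_cases k <;> simp [chebMatrix, chebRow, chebPrefactor, chebRate, mul_left_comm b, mul_assoc]

theorem det_chebLeading (z : Fin 6 → ℝ) :
    (of fun k i => if chebRate k = chebSortedRate i then chebPrefactor k (z i) else 0).det
      = (z 1 - z 0) * ((z 3 - z 2) * (z 5 - z 4)) := by
  simp [det_succ_row_zero, Fin.sum_univ_succ, chebRate, chebSortedRate, chebPrefactor,
    Fin.succAbove]
  ring

theorem tendsto_det_chebMatrix_mul_exp_neg {z : Fin 6 → ℝ} (hz : StrictMono z) :
    Tendsto (fun b => (chebMatrix b z).det * exp (-(b * ∑ i, chebSortedRate i * z i)))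
      atTop (𝓝 ((z 1 - z 0) * ((z 3 - z 2) * (z 5 - z 4)))) := by
  simpa only [chebMatrix_eq, det_chebLeading] using
    tendsto_det_exp_mul_exp_neg (fun k i => chebPrefactor k (z i)) chebSortPerm
      chebRate_eq_sortedRate monotone_chebSortedRate hz

theorem continuous_det_chebMatrix (z : Fin 6 → ℝ) : Continuous fun b => (chebMatrix b z).det := by
  simp only [chebMatrix_eq]
  fun_prop

theorem sum_mul_chebRow (b : ℝ) (v : Fin 6 → ℝ) (x : ℝ) :
    ∑ k, v k * chebRow b k x = expPoly ![0, b, 2 * b] ![v 0, v 1, v 2] ![v 3, -v 4, v 5] x := by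
  simp only [chebRow, expPoly, Fin.sum_univ_six, Fin.sum_univ_three, Fin.isValue, Matrix.cons_val,
    zero_mul, exp_zero]
  ring

theorem det_chebMatrix_ne_zero {b : ℝ} (hb : 0 < b) {z : Fin 6 → ℝ} (hz : StrictMono z) :
    (chebMatrix b z).det ≠ 0 := by
  intro hdet
  obtain ⟨v, hv, hvM⟩ := exists_vecMul_eq_zero_iff.2 hdet
  have hc : Function.Injective ![0, b, 2 * b] := by
    intro i j h
    fin_cases i <;> fin_cases j <;> simp at h ⊢ <;> linarith
  obtain ⟨hp, hq⟩ := expPoly_coeff_eq_zero (m := 3) hc hz fun j => by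
    rw [← sum_mul_chebRow]
    exact congrFun hvM j
  simp only [funext_iff, Fin.forall_fin_succ, Pi.zero_apply, cons_val_zero, cons_val_succ,
    cons_val_fin_one, forall_const, neg_eq_zero] at hp hq
  obtain ⟨h0, h1, h2⟩ := hp
  obtain ⟨h3, h4, h5⟩ := hq
  apply hv
  ext k
  fin_cases k <;> assumption

theorem stmt_8_general (a : ℝ) (ha : 0 < a) (z : Fin 6 → ℝ)
    (hz : StrictMono z) :
    0 < (Matrix.of fun i j =>
      (![fun _ => (1 : ℝ),
         fun x => Real.exp (a * x),
         fun x => Real.exp (2 * a * x),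
         fun x => x,
         fun x => -(x * Real.exp (a * x)),
         fun x => x * Real.exp (2 * a * x)] : Fin 6 → ℝ → ℝ) i (z j)).det := by
  change 0 < (chebMatrix a z).det
  have hlead : 0 < (z 1 - z 0) * ((z 3 - z 2) * (z 5 - z 4)) :=
    mul_pos (sub_pos.2 (hz (by decide)))
      (mul_pos (sub_pos.2 (hz (by decide))) (sub_pos.2 (hz (by decide))))
  have hev : ∀ᶠ b in atTop, 0 < (chebMatrix b z).det :=
    ((tendsto_det_chebMatrix_mul_exp_neg hz).eventually (lt_mem_nhds hlead)).mono
      fun b hb => pos_of_mul_pos_left hb (exp_pos _).le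
  exact isPreconnected_Ioi.pos_of_forall_ne_zero (le_principal_iff.2 (Ioi_mem_atTop 0))
    (continuous_det_chebMatrix z).continuousOn (fun b hb => det_chebMatrix_ne_zero hb hz) hev ha

/-- For `a > 0`, `{1, e^{ax}, e^{2ax}, x, -x e^{ax}, x e^{2ax}}` is a Chebyshev system
on any interval `[A,B]`. -/
theorem stmt_8 (a : ℝ) (ha : 0 < a) (A B : ℝ) (z : Fin 6 → ℝ)
    (hz : StrictMono z) (hmem : ∀ i, z i ∈ Set.Icc A B) :
    0 < (Matrix.of fun i j =>
      (![fun _ => (1 : ℝ),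
         fun x => Real.exp (a * x),
         fun x => Real.exp (2 * a * x),
         fun x => x,
         fun x => -(x * Real.exp (a * x)),
         fun x => x * Real.exp (2 * a * x)] : Fin 6 → ℝ → ℝ) i (z j)).det :=
  stmt_8_general a ha z hz
end

section
/- For λ > 0 and c > 0, the 2×2 symmetric matrix M(c) with entries M_{11} = 2λ/((λ+2)c³), M_{12} = M_{21} = (λ+1)/(2(λ+2)c²), M_{22} = 2/c is positive definite if and only if 15λ² + 30λ − 1 > 0. -/
/-!
By Sylvester's criterion the matrix is positive definite iff its `(1,1)` entry and its
determinant are positive. The entry is positive for `λ, c > 0`, and the determinant equals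
`(15λ² + 30λ - 1) / (4 (λ + 2)² c⁴)`.
-/

namespace Matrix

variable {R : Type*} [CommRing R] [StarRing R] [TrivialStar R]

theorem dotProduct_mulVec_fin_two (a b d : R) (x : Fin 2 → R) :
    star x ⬝ᵥ (!![a, b; b, d] *ᵥ x) = a * x 0 ^ 2 + 2 * b * x 0 * x 1 + d * x 1 ^ 2 := by
  simp only [star_trivial, dotProduct, mulVec, Fin.sum_univ_two, of_apply, cons_val',
    cons_val_zero, cons_val_one, empty_val', cons_val_fin_one]
  ring

theorem posDef_fin_two_iff [LinearOrder R] [IsStrictOrderedRing R] {a b d : R} :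
    (!![a, b; b, d]).PosDef ↔ 0 < a ∧ 0 < a * d - b * b := by
  rw [posDef_iff_dotProduct_mulVec]
  simp only [dotProduct_mulVec_fin_two]
  constructor
  · rintro ⟨-, hQ⟩
    have ha : 0 < a := by simpa using @hQ ![1, 0] (by simp)
    refine ⟨ha, pos_of_mul_pos_right ?_ ha.le⟩
    -- evaluate the form at `(b, -a)`, where it equals `a * (a * d - b * b)`
    have := @hQ ![b, -a] (by simp [ha.ne'])
    simp only [Fin.isValue, cons_val_zero, cons_val_one, cons_val_fin_one, mul_neg, even_two,
      Even.neg_pow] at this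
    linear_combination this
  · rintro ⟨ha, hdet⟩
    refine ⟨by ext i j; fin_cases i <;> fin_cases j <;> simp,
      fun x hx => pos_of_mul_pos_right ?_ ha.le⟩
    have hsq : a * (a * x 0 ^ 2 + 2 * b * x 0 * x 1 + d * x 1 ^ 2) =
        (a * x 0 + b * x 1) ^ 2 + (a * d - b * b) * x 1 ^ 2 := by ring
    rw [hsq]
    by_cases hx1 : x 1 = 0
    · have hx0 : x 0 ≠ 0 := fun hx0 => hx (by ext i; fin_cases i <;> assumption)
      simp only [hx1, mul_zero, add_zero, ne_eq, OfNat.ofNat_ne_zero, not_false_eq_true,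
        zero_pow]
      positivity
    · positivity

end Matrix

theorem stmt_9 (l c : ℝ) (hl : 0 < l) (hc : 0 < c) :
    (Matrix.PosDef
      (!![2 * l / ((l + 2) * c ^ 3), (l + 1) / (2 * (l + 2) * c ^ 2);
          (l + 1) / (2 * (l + 2) * c ^ 2), 2 / c]))
      ↔ 15 * l ^ 2 + 30 * l - 1 > 0 := by
  have hl2 : 0 < l + 2 := by linarith
  have hdet : 2 * l / ((l + 2) * c ^ 3) * (2 / c) -
      (l + 1) / (2 * (l + 2) * c ^ 2) * ((l + 1) / (2 * (l + 2) * c ^ 2)) =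
      (15 * l ^ 2 + 30 * l - 1) / (4 * (l + 2) ^ 2 * c ^ 4) := by
    field_simp
    ring
  have hdiag : 0 < 2 * l / ((l + 2) * c ^ 3) := by positivity
  rw [Matrix.posDef_fin_two_iff, hdet, and_iff_right hdiag]
  exact div_pos_iff_of_pos_right (by positivity)
end

section
/- For λ > 0 and c > 0, the 3×3 symmetric matrix N(c) with entries N_{11} = 2λ/((λ+4)c⁵), N_{12} = (λ+1)/(8(λ+4)c⁴), N_{13} = (λ+2)/(18(λ+4)c³), N_{22} = (λ+2)/(18(λ+4)c³), N_{23} = (λ+3)/(8(λ+4)c²), N_{33} = 2/c is positive definite if and only if all of the following hold: 1505λ³ + 9030λ² + 11499λ − 1082 > 0, 55λ² + 110λ − 9 > 0, 1295λ² + 5180λ − 4 > 0, and 55λ² + 330λ + 431 > 0. -/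
/-!
With `D = diag(1, c, c²)` one has `N(c) = ((λ + 4) c⁵)⁻¹ • D M D` for a matrix `M` that does not
depend on `c`, so `N(c)` is positive definite iff `M` is. The three principal `2 × 2` minors and
the determinant of `M` are positive multiples of the four polynomials. They are positive when `M`
is positive definite; conversely, `M₁₁ > 0`, the leading `2 × 2` minor and the determinant already
make the quadratic form of `M` a positive combination of squares (completing the square).
-/

open Matrix

namespace Matrix

lemma posDef_smul_iff {n : Type*} {A : Matrix n n ℝ} {s : ℝ} (hs : 0 < s) :
    (s • A).PosDef ↔ A.PosDef :=
  ⟨fun h => by simpa [smul_smul, hs.ne'] using h.smul (inv_pos.2 hs), fun h => h.smul hs⟩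

variable {a b c d e f : ℝ}

lemma PosDef.fin_three_minors_pos (h : (!![a, b, c; b, d, e; c, e, f]).PosDef) :
    0 < a * d - b ^ 2 ∧ 0 < a * f - c ^ 2 ∧ 0 < d * f - e ^ 2 ∧
      0 < a * d * f + 2 * b * c * e - a * e ^ 2 - d * c ^ 2 - f * b ^ 2 := by
  refine ⟨?_, ?_, ?_, ?_⟩
  · have := (h.submatrix (e := ![0, 1]) (by decide)).det_pos
    rw [det_fin_two] at this
    simpa [sq] using this
  · have := (h.submatrix (e := ![0, 2]) (by decide)).det_pos
    rw [det_fin_two] at this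
    simpa [sq] using this
  · have := (h.submatrix (e := ![1, 2]) (by decide)).det_pos
    rw [det_fin_two] at this
    simpa [sq] using this
  · have := h.det_pos
    rw [det_fin_three] at this
    simp at this
    linarith

lemma posDef_fin_three_of_leading_minors_pos (ha : 0 < a) (had : 0 < a * d - b ^ 2)
    (hdet : 0 < a * d * f + 2 * b * c * e - a * e ^ 2 - d * c ^ 2 - f * b ^ 2) :
    (!![a, b, c; b, d, e; c, e, f]).PosDef := by
  refine .of_dotProduct_mulVec_pos ?_ fun v hv => ?_
  · ext i j; fin_cases i <;> fin_cases j <;> rfl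
  set Δ₂ := a * d - b ^ 2
  set Δ₃ := a * d * f + 2 * b * c * e - a * e ^ 2 - d * c ^ 2 - f * b ^ 2
  have key : a * Δ₂ * (star v ⬝ᵥ (!![a, b, c; b, d, e; c, e, f] *ᵥ v)) =
      Δ₂ * (a * v 0 + b * v 1 + c * v 2) ^ 2 + (Δ₂ * v 1 + (a * e - b * c) * v 2) ^ 2
        + a * Δ₃ * v 2 ^ 2 := by
    simp [dotProduct, mulVec, Fin.sum_univ_three, Δ₂, Δ₃]; ring
  refine pos_of_mul_pos_right (a := a * Δ₂) ?_ (by positivity)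
  rw [key]
  obtain h2 | h2 := eq_or_ne (v 2) 0
  · obtain h1 | h1 := eq_or_ne (v 1) 0
    · have h0 : v 0 ≠ 0 := fun h0 => hv (by ext i; fin_cases i <;> assumption)
      simp only [h1, h2, mul_zero, add_zero]
      positivity
    · simp only [h2, mul_zero, add_zero]
      positivity
  · positivity

end Matrix

/-- The matrix `M = (λ + 4) • N(1)`. -/
noncomputable def normalizedMatrix (l : ℝ) : Matrix (Fin 3) (Fin 3) ℝ :=
  !![2 * l, (l + 1) / 8, (l + 2) / 18;
     (l + 1) / 8, (l + 2) / 18, (l + 3) / 8;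
     (l + 2) / 18, (l + 3) / 8, 2 * (l + 4)]

lemma posDef_normalizedMatrix_iff {l : ℝ} (hl : 0 < l) :
    (normalizedMatrix l).PosDef ↔
      (1505 * l ^ 3 + 9030 * l ^ 2 + 11499 * l - 1082 > 0 ∧
         55 * l ^ 2 + 110 * l - 9 > 0 ∧
         1295 * l ^ 2 + 5180 * l - 4 > 0 ∧
         55 * l ^ 2 + 330 * l + 431 > 0) := by
  constructor
  · intro h
    obtain ⟨h12, h13, h23, hdet⟩ := h.fin_three_minors_pos
    exact ⟨by linarith, by linarith, by linarith, by linarith⟩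
  · rintro ⟨hdet, h12, -, -⟩
    exact posDef_fin_three_of_leading_minors_pos (by positivity) (by linarith) (by linarith)

theorem stmt_13 (l c : ℝ) (hl : 0 < l) (hc : 0 < c) :
    (Matrix.PosDef
      (!![2 * l / ((l + 4) * c ^ 5), (l + 1) / (8 * (l + 4) * c ^ 4),
            (l + 2) / (18 * (l + 4) * c ^ 3);
          (l + 1) / (8 * (l + 4) * c ^ 4), (l + 2) / (18 * (l + 4) * c ^ 3),
            (l + 3) / (8 * (l + 4) * c ^ 2);
          (l + 2) / (18 * (l + 4) * c ^ 3), (l + 3) / (8 * (l + 4) * c ^ 2),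
            2 / c]))
      ↔ (1505 * l ^ 3 + 9030 * l ^ 2 + 11499 * l - 1082 > 0 ∧
         55 * l ^ 2 + 110 * l - 9 > 0 ∧
         1295 * l ^ 2 + 5180 * l - 4 > 0 ∧
         55 * l ^ 2 + 330 * l + 431 > 0) := by
  have hl4 : 0 < l + 4 := by linarith
  set D : Matrix (Fin 3) (Fin 3) ℝ := diagonal ![1, c, c ^ 2]
  have hD : IsUnit D := by
    simp [D, isUnit_diagonal, Pi.isUnit_iff, Fin.forall_fin_succ, hc.ne']
  calc _ ↔ (((l + 4) * c ^ 5)⁻¹ • (star D * normalizedMatrix l * D)).PosDef := by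
        congr! 1
        ext i j
        fin_cases i <;> fin_cases j <;>
          simp [D, normalizedMatrix, star_eq_conjTranspose] <;> field_simp
    _ ↔ (normalizedMatrix l).PosDef := by
        rw [posDef_smul_iff (by positivity), hD.posDef_star_left_conjugate_iff]
    _ ↔ _ := posDef_normalizedMatrix_iff hl
end

section
/- Let λ > 0 and define Ψ_1(c) = c^λ, Ψ_2(c) = log(c)·c^λ, Ψ_3(c) = c^{λ+1}, Ψ_4(c) = log(c)·c^{λ+1}, Ψ_5(c) = c^{λ+2}, Ψ_6(c) = log(c)·c^{λ+2} on (0,∞). Then the iterated divided derivatives satisfy f_{1,1}(c) = λc^{λ−1}, f_{2,2}(c) = 1/c, f_{3,3}(c) = (λ+1)/λ, f_{4,4}(c) = 1/c, f_{5,5}(c) = 4(λ+2)/(λ+1), and f_{6,6}(c) = 1/c. -/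
/-!
Every `Ψ_l` has the shape `x ^ p * (a + b * log x)`. This shape is preserved by
differentiation on `(0, ∞)` and by division by a pure power `c * x ^ q`, and the diagonal
entries turn out to be pure powers. So each `f_{l,t}` is determined by a triple `(p, a, b)`,
which is computed row by row: on the open set `(0, ∞)` a derivative is determined by the
function, so `f_{l,t}` must agree there with the derivative of the computed quotient.
-/

open Set Real

theorem Set.EqOn.hasDerivAt_unique {𝕜 E : Type*} [NontriviallyNormedField 𝕜]
    [NormedAddCommGroup E] [NormedSpace 𝕜 E] {s : Set 𝕜} (hs : IsOpen s) {F G F' G' : 𝕜 → E}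
    (hFG : EqOn F G s) (hF : ∀ x ∈ s, HasDerivAt F (F' x) x)
    (hG : ∀ x ∈ s, HasDerivAt G (G' x) x) : EqOn F' G' s := fun x hx =>
  (hF x hx).unique <| (hG x hx).congr_of_eventuallyEq <|
    Filter.eventuallyEq_of_mem (hs.mem_nhds hx) hFG

noncomputable def powLog (p a b x : ℝ) : ℝ := x ^ p * (a + b * log x)

theorem hasDerivAt_powLog {p a b x : ℝ} (hx : 0 < x) :
    HasDerivAt (powLog p a b) (powLog (p - 1) (p * a + b) (p * b) x) x := by
  have h := (hasDerivAt_rpow_const (p := p) (Or.inl hx.ne')).mul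
    (((hasDerivAt_log hx.ne').const_mul b).const_add a)
  refine h.congr_deriv ?_
  rw [powLog, rpow_sub_one hx.ne']
  field_simp
  ring

theorem powLog_div_powLog {p a b q c x : ℝ} (hx : 0 < x) :
    powLog p a b x / powLog q c 0 x = powLog (p - q) (a / c) (b / c) x := by
  rw [powLog, powLog, powLog, rpow_sub hx, zero_mul, add_zero, mul_div_mul_comm, add_div,
    mul_div_right_comm]

theorem eqOn_powLog_one_zero {g : ℝ → ℝ} {p : ℝ} (h : ∀ c : ℝ, 0 < c → g c = c ^ p) :
    EqOn g (powLog p 1 0) (Ioi 0) := fun c hc => by simp [powLog, h c hc]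

theorem eqOn_powLog_zero_one {g : ℝ → ℝ} {p : ℝ} (h : ∀ c : ℝ, 0 < c → g c = log c * c ^ p) :
    EqOn g (powLog p 0 1) (Ioi 0) := fun c hc => by simp [powLog, h c hc, mul_comm]

def IsDividedDerivTable (Ψ : ℕ → ℝ → ℝ) (f : ℕ → ℕ → ℝ → ℝ) (n : ℕ) : Prop :=
  (∀ l, 1 ≤ l → l ≤ n → ∀ c : ℝ, 0 < c → HasDerivAt (Ψ l) (f l 1 c) c) ∧
  (∀ t l, 2 ≤ t → t ≤ l → l ≤ n → ∀ c : ℝ, 0 < c →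
    HasDerivAt (fun x => f l (t - 1) x / f (t - 1) (t - 1) x) (f l t c) c)

namespace IsDividedDerivTable

variable {Ψ : ℕ → ℝ → ℝ} {f : ℕ → ℕ → ℝ → ℝ} {n l t : ℕ} {p a b q c p' a' b' lam : ℝ}

/- In `eqOn_one` and `eqOn_succ` the default arguments let a caller state the normalised entry
`(p', a', b')` as the expected type and leave the index bounds and the coefficient arithmetic
to be discharged automatically. -/
theorem eqOn_one (hT : IsDividedDerivTable Ψ f n) (hΨ : EqOn (Ψ l) (powLog p a b) (Ioi 0))
    (hl : 1 ≤ l := by omega) (hln : l ≤ n := by omega)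
    (hp : p - 1 = p' := by ring) (ha : p * a + b = a' := by ring) (hb : p * b = b' := by ring) :
    EqOn (f l 1) (powLog p' a' b') (Ioi 0) := by
  subst hp ha hb
  exact hΨ.hasDerivAt_unique isOpen_Ioi (fun x hx => hT.1 l hl hln x hx)
    (fun x hx => hasDerivAt_powLog hx)

theorem eqOn_succ (hT : IsDividedDerivTable Ψ f n) (hg : EqOn (f l t) (powLog p a b) (Ioi 0))
    (hd : EqOn (f t t) (powLog q c 0) (Ioi 0))
    (ht : 1 ≤ t := by omega) (htl : t + 1 ≤ l := by omega) (hln : l ≤ n := by omega)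
    (hp : p - q - 1 = p' := by ring)
    (ha : (p - q) * (a / c) + b / c = a' := by field_simp; ring)
    (hb : (p - q) * (b / c) = b' := by field_simp; ring) :
    EqOn (f l (t + 1)) (powLog p' a' b') (Ioi 0) := by
  subst hp ha hb
  have hquot : EqOn (fun x => f l t x / f t t x) (powLog (p - q) (a / c) (b / c)) (Ioi 0) :=
    fun x hx => by simp only [hg hx, hd hx, powLog_div_powLog hx]
  exact hquot.hasDerivAt_unique isOpen_Ioi
    (fun x hx => by simpa using hT.2 (t + 1) l (by omega) htl hln x hx)
    (fun x hx => hasDerivAt_powLog hx)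

theorem eqOn_two_two (hT : IsDividedDerivTable Ψ f n) (hn : 2 ≤ n) (hlam : 0 < lam)
    (hΨ : EqOn (Ψ 2) (powLog lam 0 1) (Ioi 0))
    (h11 : EqOn (f 1 1) (powLog (lam - 1) lam 0) (Ioi 0)) :
    EqOn (f 2 2) (powLog (-1) 1 0) (Ioi 0) := by
  have h21 : EqOn (f 2 1) (powLog (lam - 1) 1 lam) (Ioi 0) := hT.eqOn_one hΨ
  exact hT.eqOn_succ h21 h11

theorem eqOn_three_three (hT : IsDividedDerivTable Ψ f n) (hn : 3 ≤ n) (hlam : 0 < lam)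
    (hΨ : EqOn (Ψ 3) (powLog (lam + 1) 1 0) (Ioi 0))
    (h11 : EqOn (f 1 1) (powLog (lam - 1) lam 0) (Ioi 0))
    (h22 : EqOn (f 2 2) (powLog (-1) 1 0) (Ioi 0)) :
    EqOn (f 3 3) (powLog 0 ((lam + 1) / lam) 0) (Ioi 0) := by
  have h31 : EqOn (f 3 1) (powLog lam (lam + 1) 0) (Ioi 0) := hT.eqOn_one hΨ
  have h32 : EqOn (f 3 2) (powLog 0 ((lam + 1) / lam) 0) (Ioi 0) := hT.eqOn_succ h31 h11
  exact hT.eqOn_succ h32 h22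

theorem eqOn_four_four (hT : IsDividedDerivTable Ψ f n) (hn : 4 ≤ n) (hlam : 0 < lam)
    (hΨ : EqOn (Ψ 4) (powLog (lam + 1) 0 1) (Ioi 0))
    (h11 : EqOn (f 1 1) (powLog (lam - 1) lam 0) (Ioi 0))
    (h22 : EqOn (f 2 2) (powLog (-1) 1 0) (Ioi 0))
    (h33 : EqOn (f 3 3) (powLog 0 ((lam + 1) / lam) 0) (Ioi 0)) :
    EqOn (f 4 4) (powLog (-1) 1 0) (Ioi 0) := by
  have h41 : EqOn (f 4 1) (powLog lam 1 (lam + 1)) (Ioi 0) := hT.eqOn_one hΨ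
  have h42 : EqOn (f 4 2) (powLog 0 ((lam + 2) / lam) ((lam + 1) / lam)) (Ioi 0) :=
    hT.eqOn_succ h41 h11
  have h43 : EqOn (f 4 3) (powLog 0 ((2 * lam + 3) / lam) ((lam + 1) / lam)) (Ioi 0) :=
    hT.eqOn_succ h42 h22
  exact hT.eqOn_succ h43 h33

theorem eqOn_five_five (hT : IsDividedDerivTable Ψ f n) (hn : 5 ≤ n) (hlam : 0 < lam)
    (hΨ : EqOn (Ψ 5) (powLog (lam + 2) 1 0) (Ioi 0))
    (h11 : EqOn (f 1 1) (powLog (lam - 1) lam 0) (Ioi 0))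
    (h22 : EqOn (f 2 2) (powLog (-1) 1 0) (Ioi 0))
    (h33 : EqOn (f 3 3) (powLog 0 ((lam + 1) / lam) 0) (Ioi 0))
    (h44 : EqOn (f 4 4) (powLog (-1) 1 0) (Ioi 0)) :
    EqOn (f 5 5) (powLog 0 (4 * (lam + 2) / (lam + 1)) 0) (Ioi 0) := by
  have h51 : EqOn (f 5 1) (powLog (lam + 1) (lam + 2) 0) (Ioi 0) := hT.eqOn_one hΨ
  have h52 : EqOn (f 5 2) (powLog 1 (2 * (lam + 2) / lam) 0) (Ioi 0) := hT.eqOn_succ h51 h11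
  have h53 : EqOn (f 5 3) (powLog 1 (4 * (lam + 2) / lam) 0) (Ioi 0) := hT.eqOn_succ h52 h22
  have h54 : EqOn (f 5 4) (powLog 0 (4 * (lam + 2) / (lam + 1)) 0) (Ioi 0) :=
    hT.eqOn_succ h53 h33
  exact hT.eqOn_succ h54 h44

theorem eqOn_six_six (hT : IsDividedDerivTable Ψ f n) (hn : 6 ≤ n) (hlam : 0 < lam)
    (hΨ : EqOn (Ψ 6) (powLog (lam + 2) 0 1) (Ioi 0))
    (h11 : EqOn (f 1 1) (powLog (lam - 1) lam 0) (Ioi 0))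
    (h22 : EqOn (f 2 2) (powLog (-1) 1 0) (Ioi 0))
    (h33 : EqOn (f 3 3) (powLog 0 ((lam + 1) / lam) 0) (Ioi 0))
    (h44 : EqOn (f 4 4) (powLog (-1) 1 0) (Ioi 0))
    (h55 : EqOn (f 5 5) (powLog 0 (4 * (lam + 2) / (lam + 1)) 0) (Ioi 0)) :
    EqOn (f 6 6) (powLog (-1) 1 0) (Ioi 0) := by
  have h61 : EqOn (f 6 1) (powLog (lam + 1) 1 (lam + 2)) (Ioi 0) := hT.eqOn_one hΨ
  have h62 : EqOn (f 6 2) (powLog 1 ((lam + 4) / lam) (2 * (lam + 2) / lam)) (Ioi 0) :=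
    hT.eqOn_succ h61 h11
  have h63 : EqOn (f 6 3) (powLog 1 (4 * (lam + 3) / lam) (4 * (lam + 2) / lam)) (Ioi 0) :=
    hT.eqOn_succ h62 h22
  have h64 : EqOn (f 6 4)
      (powLog 0 (4 * (2 * lam + 5) / (lam + 1)) (4 * (lam + 2) / (lam + 1))) (Ioi 0) :=
    hT.eqOn_succ h63 h33
  have h65 : EqOn (f 6 5)
      (powLog 0 (4 * (3 * lam + 7) / (lam + 1)) (4 * (lam + 2) / (lam + 1))) (Ioi 0) :=
    hT.eqOn_succ h64 h44
  exact hT.eqOn_succ h65 h55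

end IsDividedDerivTable

/-- Iterated divided-derivative computations for the two-term exponential regression
model: `Ψ_1 = c^λ, Ψ_2 = log(c) c^λ, …` on `(0, ∞)`. -/
theorem stmt_14 (lam : ℝ) (hlam : 0 < lam) (Ψ : ℕ → ℝ → ℝ)
    (hΨ1 : ∀ c : ℝ, 0 < c → Ψ 1 c = c ^ lam)
    (hΨ2 : ∀ c : ℝ, 0 < c → Ψ 2 c = Real.log c * c ^ lam)
    (hΨ3 : ∀ c : ℝ, 0 < c → Ψ 3 c = c ^ (lam + 1))
    (hΨ4 : ∀ c : ℝ, 0 < c → Ψ 4 c = Real.log c * c ^ (lam + 1))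
    (hΨ5 : ∀ c : ℝ, 0 < c → Ψ 5 c = c ^ (lam + 2))
    (hΨ6 : ∀ c : ℝ, 0 < c → Ψ 6 c = Real.log c * c ^ (lam + 2))
    (f : ℕ → ℕ → ℝ → ℝ)
    (hf1 : ∀ l, 1 ≤ l → l ≤ 6 → ∀ c : ℝ, 0 < c → HasDerivAt (Ψ l) (f l 1 c) c)
    (hft : ∀ t l, 2 ≤ t → t ≤ l → l ≤ 6 → ∀ c : ℝ, 0 < c →
      HasDerivAt (fun x => f l (t - 1) x / f (t - 1) (t - 1) x) (f l t c) c) :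
    ∀ c : ℝ, 0 < c →
      f 1 1 c = lam * c ^ (lam - 1) ∧
      f 2 2 c = 1 / c ∧
      f 3 3 c = (lam + 1) / lam ∧
      f 4 4 c = 1 / c ∧
      f 5 5 c = 4 * (lam + 2) / (lam + 1) ∧
      f 6 6 c = 1 / c := by
  have hT : IsDividedDerivTable Ψ f 6 := ⟨hf1, hft⟩
  have h11 : EqOn (f 1 1) (powLog (lam - 1) lam 0) (Ioi 0) :=
    hT.eqOn_one (eqOn_powLog_one_zero hΨ1)
  have h22 := hT.eqOn_two_two (by norm_num) hlam (eqOn_powLog_zero_one hΨ2) h11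
  have h33 := hT.eqOn_three_three (by norm_num) hlam (eqOn_powLog_one_zero hΨ3) h11 h22
  have h44 := hT.eqOn_four_four (by norm_num) hlam (eqOn_powLog_zero_one hΨ4) h11 h22 h33
  have h55 := hT.eqOn_five_five (by norm_num) hlam (eqOn_powLog_one_zero hΨ5) h11 h22 h33 h44
  have h66 := hT.eqOn_six_six (by norm_num) hlam (eqOn_powLog_zero_one hΨ6) h11 h22 h33 h44 h55
  intro c hc
  simp [h11 hc, h22 hc, h33 hc, h44 hc, h55 hc, h66 hc, powLog, rpow_neg_one, mul_comm]
end

section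
/- Define Ψ_1(c) = c, Ψ_2(c) = e^c, Ψ_3(c) = c e^c, Ψ_4(c) = e^{2c}, Ψ_5(c) = c e^{2c} on ℝ. Then the iterated divided derivatives satisfy f_{1,1}(c) = 1, f_{2,2}(c) = e^c, f_{3,3}(c) = 1, f_{4,4}(c) = 4e^c, f_{5,5}(c) = 1, and consequently all f_{l,l} are strictly positive on ℝ. -/
/-!
Every function in the triangle is of the form `(a + b c) e^{k c}`. This family is closed under
differentiation, `((a + b c) e^{k c})' = ((b + k a) + k b c) e^{k c}`, and under division by a
member with `b = 0`, so the triangle reduces to arithmetic on the parameters `(a, b, k)`; the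
diagonal entries all have `b = 0` and `a > 0`.
-/

open Real

noncomputable def linExp (a b k x : ℝ) : ℝ := (a + b * x) * exp (k * x)

theorem hasDerivAt_linExp (a b k x : ℝ) :
    HasDerivAt (linExp a b k) (linExp (b + k * a) (k * b) k x) x := by
  have hlin : HasDerivAt (fun y : ℝ => a + b * y) b x := by
    simpa using ((hasDerivAt_id x).const_mul b).const_add a
  have hexp : HasDerivAt (fun y : ℝ => exp (k * y)) (exp (k * x) * k) x := by
    simpa using ((hasDerivAt_id x).const_mul k).exp
  exact (hlin.mul hexp).congr_deriv (by simp only [linExp]; ring)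

theorem linExp_div_linExp (a b k a' k' x : ℝ) (ha' : a' ≠ 0) :
    linExp a b k x / linExp a' 0 k' x = linExp (a / a') (b / a') (k - k') x := by
  simp only [linExp, zero_mul, add_zero, sub_mul, exp_sub]
  field_simp

theorem linExp_pos {a : ℝ} (ha : 0 < a) (k x : ℝ) : 0 < linExp a 0 k x := by
  simp only [linExp, zero_mul, add_zero]
  positivity

theorem eq_linExp_of_hasDerivAt {g F : ℝ → ℝ} {a b k a₁ b₁ : ℝ}
    (hg : g = linExp a b k) (hF : ∀ x, HasDerivAt g (F x) x)
    (ha₁ : b + k * a = a₁) (hb₁ : k * b = b₁) : F = linExp a₁ b₁ k := by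
  funext x
  subst hg ha₁ hb₁
  exact (hF x).unique (hasDerivAt_linExp a b k x)

theorem eq_linExp_of_hasDerivAt_div {g h F : ℝ → ℝ} {a b k a' k' a₁ b₁ k₁ : ℝ}
    (hg : g = linExp a b k) (hh : h = linExp a' 0 k')
    (hF : ∀ x, HasDerivAt (fun y => g y / h y) (F x) x) (ha' : a' ≠ 0)
    (ha₁ : b / a' + (k - k') * (a / a') = a₁) (hb₁ : (k - k') * (b / a') = b₁)
    (hk₁ : k - k' = k₁) : F = linExp a₁ b₁ k₁ := by
  subst hk₁
  refine eq_linExp_of_hasDerivAt ?_ hF ha₁ hb₁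
  funext x
  rw [hg, hh, linExp_div_linExp a b k a' k' x ha']

/-- Iterated divided-derivative computations for the LINEXP model:
`Ψ_1 = c, Ψ_2 = e^c, Ψ_3 = c e^c, Ψ_4 = e^{2c}, Ψ_5 = c e^{2c}` on `ℝ`. -/
theorem stmt_15 (Ψ : ℕ → ℝ → ℝ)
    (hΨ1 : ∀ c : ℝ, Ψ 1 c = c)
    (hΨ2 : ∀ c : ℝ, Ψ 2 c = Real.exp c)
    (hΨ3 : ∀ c : ℝ, Ψ 3 c = c * Real.exp c)
    (hΨ4 : ∀ c : ℝ, Ψ 4 c = Real.exp (2 * c))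
    (hΨ5 : ∀ c : ℝ, Ψ 5 c = c * Real.exp (2 * c))
    (f : ℕ → ℕ → ℝ → ℝ)
    (hf1 : ∀ l, 1 ≤ l → l ≤ 5 → ∀ c : ℝ, HasDerivAt (Ψ l) (f l 1 c) c)
    (hft : ∀ t l, 2 ≤ t → t ≤ l → l ≤ 5 → ∀ c : ℝ,
      HasDerivAt (fun x => f l (t - 1) x / f (t - 1) (t - 1) x) (f l t c) c) :
    (∀ c : ℝ,
      f 1 1 c = 1 ∧ f 2 2 c = Real.exp c ∧ f 3 3 c = 1 ∧
      f 4 4 c = 4 * Real.exp c ∧ f 5 5 c = 1) ∧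
    ∀ l, 1 ≤ l → l ≤ 5 → ∀ c : ℝ, 0 < f l l c := by
  obtain ⟨Ψ1, Ψ2, Ψ3, Ψ4, Ψ5⟩ : Ψ 1 = linExp 0 1 0 ∧ Ψ 2 = linExp 1 0 1 ∧ Ψ 3 = linExp 0 1 1 ∧
      Ψ 4 = linExp 1 0 2 ∧ Ψ 5 = linExp 0 1 2 := by
    refine ⟨?_, ?_, ?_, ?_, ?_⟩ <;> funext c <;> simp [linExp, *]
  have f11 : f 1 1 = linExp 1 0 0 := by
    apply eq_linExp_of_hasDerivAt Ψ1 (hf1 1 _ _) <;> norm_num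
  have f21 : f 2 1 = linExp 1 0 1 := by
    apply eq_linExp_of_hasDerivAt Ψ2 (hf1 2 _ _) <;> norm_num
  have f31 : f 3 1 = linExp 1 1 1 := by
    apply eq_linExp_of_hasDerivAt Ψ3 (hf1 3 _ _) <;> norm_num
  have f41 : f 4 1 = linExp 2 0 2 := by
    apply eq_linExp_of_hasDerivAt Ψ4 (hf1 4 _ _) <;> norm_num
  have f51 : f 5 1 = linExp 1 2 2 := by
    apply eq_linExp_of_hasDerivAt Ψ5 (hf1 5 _ _) <;> norm_num
  have f22 : f 2 2 = linExp 1 0 1 := by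
    apply eq_linExp_of_hasDerivAt_div f21 f11 (hft 2 2 _ _ _) <;> norm_num
  have f32 : f 3 2 = linExp 2 1 1 := by
    apply eq_linExp_of_hasDerivAt_div f31 f11 (hft 2 3 _ _ _) <;> norm_num
  have f42 : f 4 2 = linExp 4 0 2 := by
    apply eq_linExp_of_hasDerivAt_div f41 f11 (hft 2 4 _ _ _) <;> norm_num
  have f52 : f 5 2 = linExp 4 4 2 := by
    apply eq_linExp_of_hasDerivAt_div f51 f11 (hft 2 5 _ _ _) <;> norm_num
  have f33 : f 3 3 = linExp 1 0 0 := by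
    apply eq_linExp_of_hasDerivAt_div f32 f22 (hft 3 3 _ _ _) <;> norm_num
  have f43 : f 4 3 = linExp 4 0 1 := by
    apply eq_linExp_of_hasDerivAt_div f42 f22 (hft 3 4 _ _ _) <;> norm_num
  have f53 : f 5 3 = linExp 8 4 1 := by
    apply eq_linExp_of_hasDerivAt_div f52 f22 (hft 3 5 _ _ _) <;> norm_num
  have f44 : f 4 4 = linExp 4 0 1 := by
    apply eq_linExp_of_hasDerivAt_div f43 f33 (hft 4 4 _ _ _) <;> norm_num
  have f54 : f 5 4 = linExp 12 4 1 := by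
    apply eq_linExp_of_hasDerivAt_div f53 f33 (hft 4 5 _ _ _) <;> norm_num
  have f55 : f 5 5 = linExp 1 0 0 := by
    apply eq_linExp_of_hasDerivAt_div f54 f44 (hft 5 5 _ _ _) <;> norm_num
  refine ⟨fun c => by simp [f11, f22, f33, f44, f55, linExp], fun l hl₁ hl₅ c => ?_⟩
  interval_cases l <;> simp only [f11, f22, f33, f44, f55] <;> exact linExp_pos (by norm_num) _ _
end
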